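/- arXiv:1703.07181 — 11 statements merged into one kernel-verified Lean document; each statement's English description precedes it below -/
import Mathlib

section
/- Let W be a nilpotent n×n matrix over a field F and let X be the tn×tn block upper triangular matrix with W on the diagonal blocks, W on the first superdiagonal blocks, and zero elsewhere. Then rank(X^k) = t·rank(W^k) for all k ≥ 0. -/
open Matrix Kronecker

section aux

variable {F : Type*} [Field F] {t n : ℕ}

lemma one_kron_mulVec (B : Matrix (Fin n) (Fin n) F) (v : Fin t × Fin n → F)
    (i : Fin t) (p : Fin n) :
    (((1 : Matrix (Fin t) (Fin t) F) ⊗ₖ B) *ᵥ v) (i, p)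
      = (B *ᵥ fun q => v (i, q)) p := by
  simp only [mulVec, dotProduct, Fintype.sum_prod_type, kroneckerMap_apply, one_apply]
  rw [Finset.sum_eq_single i]
  · simp
  · intro j _ hj
    simp [Ne.symm hj]
  · simp

lemma rank_one_kronecker (B : Matrix (Fin n) (Fin n) F) :
    ((1 : Matrix (Fin t) (Fin t) F) ⊗ₖ B).rank = t * B.rank := by
  classical
  set Bl := B.mulVecLin with hBl
  -- the linear map from (Fin t → range Bl) into vectors
  let φ : (Fin t → LinearMap.range Bl) →ₗ[F] ((Fin t × Fin n) → F) :=
    { toFun := fun w x => (w x.1 : Fin n → F) x.2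
      map_add' := by intro a b; ext x; simp
      map_smul' := by intro c a; ext x; simp }
  have hφinj : Function.Injective φ := by
    intro a b hab
    funext i
    ext p
    exact congrFun hab (i, p)
  have hrange : LinearMap.range (((1 : Matrix (Fin t) (Fin t) F) ⊗ₖ B).mulVecLin)
      = LinearMap.range φ := by
    ext x
    constructor
    · rintro ⟨v, rfl⟩
      refine ⟨fun i => ⟨B *ᵥ fun q => v (i, q), ⟨fun q => v (i, q), rfl⟩⟩, ?_⟩
      funext y
      simpa [φ] using (one_kron_mulVec B v y.1 y.2).symm
    · rintro ⟨w, rfl⟩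
      choose u hu using fun i => (w i).2
      refine ⟨fun y => u y.1 y.2, ?_⟩
      funext y
      have := one_kron_mulVec B (fun y => u y.1 y.2) y.1 y.2
      simp only [mulVecLin_apply, this]
      simp only [φ, LinearMap.coe_mk, AddHom.coe_mk, ← hu y.1, hBl, mulVecLin_apply]
  rw [Matrix.rank, hrange, LinearMap.finrank_range_of_inj hφinj,
    Module.finrank_pi_fintype, Finset.sum_const, Finset.card_univ, Fintype.card_fin,
    smul_eq_mul, Matrix.rank]

end aux

/-- If `W` is a nilpotent `n × n` matrix and `X` is the `t × t` block upper bidiagonal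
matrix with `W` on the diagonal and first superdiagonal blocks, then
`rank(X^k) = t * rank(W^k)` for all `k`. -/
theorem rank_pow_block_bidiagonal_nilpotent {F : Type*} [Field F] {n t : ℕ} (ht : 1 ≤ t)
    (W : Matrix (Fin n) (Fin n) F) (hW : IsNilpotent W)
    (X : Matrix (Fin t × Fin n) (Fin t × Fin n) F)
    (hX : ∀ p q : Fin t × Fin n,
      X p q = if p.1 = q.1 ∨ (p.1 : ℕ) + 1 = (q.1 : ℕ) then W p.2 q.2 else 0) :
    ∀ k : ℕ, (X ^ k).rank = t * (W ^ k).rank := by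
  classical
  set A : Matrix (Fin t) (Fin t) F :=
    Matrix.of fun i j => if i = j ∨ (i : ℕ) + 1 = (j : ℕ) then 1 else 0 with hA
  have hXA : X = A ⊗ₖ W := by
    ext ⟨i, p⟩ ⟨j, q⟩
    rw [hX]
    by_cases h : i = j ∨ (i : ℕ) + 1 = (j : ℕ) <;> simp [hA, h]
  have hAtri : A.BlockTriangular id := by
    intro i j hij
    have h1 : i ≠ j := by rintro rfl; exact lt_irrefl _ hij
    have h2 : (i : ℕ) + 1 ≠ (j : ℕ) := by
      have : (j : ℕ) < (i : ℕ) := hij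
      omega
    simp [hA, h1, h2]
  have hAdet : A.det = 1 := by
    rw [Matrix.det_of_upperTriangular hAtri]
    simp [hA]
  have hpow : ∀ k : ℕ, X ^ k = (A ^ k) ⊗ₖ (W ^ k) := by
    intro k
    induction k with
    | zero => simp [Matrix.one_kronecker_one]
    | succ k ih => rw [pow_succ, pow_succ, pow_succ, ih, hXA, Matrix.mul_kronecker_mul]
  intro k
  rw [hpow k]
  have hfact : (A ^ k) ⊗ₖ (W ^ k)
      = ((A ^ k) ⊗ₖ (1 : Matrix (Fin n) (Fin n) F))
        * ((1 : Matrix (Fin t) (Fin t) F) ⊗ₖ (W ^ k)) := by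
    rw [← Matrix.mul_kronecker_mul, mul_one, one_mul]
  have hunit : IsUnit ((A ^ k) ⊗ₖ (1 : Matrix (Fin n) (Fin n) F)).det := by
    rw [Matrix.det_kronecker, Matrix.det_pow, hAdet]
    simp
  rw [hfact, Matrix.rank_mul_eq_right_of_isUnit_det _ _ hunit, rank_one_kronecker]
end

section
/- Let B be an n×n matrix over a field F with single eigenvalue λ = 0, i.e. B nilpotent, and let C = [[B, B],[0, B]]. Then for each i, rank(C^(i-1)) - rank(C^i) = 2(rank(B^(i-1)) - rank(B^i)); in particular the Weyr structure components of C are twice those of B. -/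
open Matrix

/-- A submodule product is linearly equivalent to the product of submodules. -/
def submodProdEquiv {R M M' : Type*} [Ring R] [AddCommGroup M] [AddCommGroup M']
    [Module R M] [Module R M'] (p : Submodule R M) (q : Submodule R M') :
    (p.prod q) ≃ₗ[R] p × q where
  toFun x := (⟨(x : M × M').1, x.2.1⟩, ⟨(x : M × M').2, x.2.2⟩)
  invFun y := ⟨((y.1 : M), (y.2 : M')), ⟨y.1.2, y.2.2⟩⟩
  map_add' _ _ := rfl
  map_smul' _ _ := rfl
  left_inv _ := rfl
  right_inv _ := rfl

theorem rank_fromBlocks_diag {F : Type*} [Field F] {n : ℕ} (A A' : Matrix (Fin n) (Fin n) F) :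
    (Matrix.fromBlocks A 0 0 A').rank = A.rank + A'.rank := by
  set e := LinearEquiv.sumArrowLequivProdArrow (Fin n) (Fin n) F F with he
  have h : (Matrix.fromBlocks A 0 0 A').mulVecLin =
      e.symm.toLinearMap ∘ₗ (A.mulVecLin.prodMap A'.mulVecLin) ∘ₗ e.toLinearMap := by
    apply LinearMap.ext; intro v
    have hv : v = Sum.elim (v ∘ Sum.inl) (v ∘ Sum.inr) := funext fun x => by cases x <;> rfl
    rw [hv]; funext x
    cases x <;> simp [he, fromBlocks_mulVec, LinearEquiv.sumArrowLequivProdArrow,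
      Equiv.sumArrowEquivProdArrow]
  have hker : LinearMap.ker (Matrix.fromBlocks A 0 0 A').mulVecLin =
      Submodule.map e.symm.toLinearMap
        ((LinearMap.ker A.mulVecLin).prod (LinearMap.ker A'.mulVecLin)) := by
    rw [h, ← LinearMap.ker_prodMap]
    ext v
    constructor
    · intro hv
      exact ⟨e v, by simpa using hv, e.symm_apply_apply v⟩
    · rintro ⟨w, hw, rfl⟩
      simpa using hw
  have hkf : Module.finrank F (LinearMap.ker (Matrix.fromBlocks A 0 0 A').mulVecLin) =
      Module.finrank F (LinearMap.ker A.mulVecLin) +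
      Module.finrank F (LinearMap.ker A'.mulVecLin) := by
    rw [hker, LinearEquiv.finrank_map_eq, ← Module.finrank_prod]
    exact LinearEquiv.finrank_eq (submodProdEquiv _ _)
  have r1 := LinearMap.finrank_range_add_finrank_ker (Matrix.fromBlocks A 0 0 A').mulVecLin
  have r2 := LinearMap.finrank_range_add_finrank_ker A.mulVecLin
  have r3 := LinearMap.finrank_range_add_finrank_ker A'.mulVecLin
  simp only [Module.finrank_pi, Fintype.card_sum, Fintype.card_fin] at r1 r2 r3
  unfold Matrix.rank
  omega

theorem rank_fromBlocks_triangular {F : Type*} [Field F] {n : ℕ}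
    (A : Matrix (Fin n) (Fin n) F) (c : F) :
    (Matrix.fromBlocks A (c • A) 0 A).rank = 2 * A.rank := by
  have hU : IsUnit (Matrix.fromBlocks (1 : Matrix (Fin n) (Fin n) F) (-c • 1) (0 : Matrix (Fin n) (Fin n) F) (1 : Matrix (Fin n) (Fin n) F)).det := by
    rw [Matrix.det_fromBlocks_zero₂₁]
    simp
  have hmul : Matrix.fromBlocks A (c • A) 0 A *
      Matrix.fromBlocks (1 : Matrix (Fin n) (Fin n) F) (-c • 1) (0 : Matrix (Fin n) (Fin n) F) (1 : Matrix (Fin n) (Fin n) F) =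
      Matrix.fromBlocks A 0 0 A := by
    rw [Matrix.fromBlocks_multiply]
    congr 1 <;> simp [Matrix.mul_smul, Matrix.smul_mul, smul_smul]
  have := Matrix.rank_mul_eq_left_of_isUnit_det _ (Matrix.fromBlocks A (c • A) 0 A) hU
  rw [hmul] at this
  rw [← this, rank_fromBlocks_diag]
  ring

/-- For a nilpotent matrix `B` and `C = [[B, B], [0, B]]`, each Weyr structure component
of `C` (at eigenvalue `0`) is twice the corresponding one of `B`. -/
theorem weyr_structure_doubling_nilpotent {F : Type*} [Field F] {n : ℕ}
    (B : Matrix (Fin n) (Fin n) F) (hB : IsNilpotent B)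
    (C : Matrix (Fin n ⊕ Fin n) (Fin n ⊕ Fin n) F)
    (hC : C = Matrix.fromBlocks B B 0 B) :
    ∀ i : ℕ, 1 ≤ i →
      (C ^ (i - 1)).rank - (C ^ i).rank = 2 * ((B ^ (i - 1)).rank - (B ^ i).rank) := by
  have hpow : ∀ k : ℕ, C ^ k = Matrix.fromBlocks (B ^ k) ((k : F) • B ^ k) 0 (B ^ k) := by
    intro k
    induction k with
    | zero => simp [Matrix.fromBlocks_one]
    | succ k ih =>
      rw [pow_succ, ih, hC, Matrix.fromBlocks_multiply]
      congr 1 <;> push_cast <;>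
        simp [pow_succ, Matrix.smul_mul, add_smul, one_smul, add_comm]
  have hrank : ∀ k : ℕ, (C ^ k).rank = 2 * (B ^ k).rank := by
    intro k
    rw [hpow k, rank_fromBlocks_triangular]
  intro i hi
  have hle : (B ^ i).rank ≤ (B ^ (i - 1)).rank := by
    have : B ^ i = B ^ (i - 1) * B := by
      rw [← pow_succ]
      congr 1
      omega
    rw [this]
    exact Matrix.rank_mul_le_left _ _
  rw [hrank, hrank]
  omega
end

section
/- Let B = I + W where W is an n×n nilpotent matrix over a field F of characteristic 0, and let X = [[W, B],[0, W]] (so X = C - I where C = [[B,B],[0,B]]). Then the nilpotent index of X is one more than the nilpotent index of W (assuming W ≠ 0). -/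
/-! Since `W` commutes with `B = 1 + W`, induction gives
`X ^ k = [[W ^ k, k • W ^ (k - 1) * B], [0, W ^ k]]`. For `k = r + 1` every block vanishes, while
for `k = r` the corner is `r • W ^ (r - 1) * (1 + W) = r • W ^ (r - 1)`, nonzero in
characteristic zero. -/

namespace Matrix

variable {m α : Type*} [Fintype m] [DecidableEq m] [Semiring α]

theorem fromBlocks_pow_of_commute {A B : Matrix m m α} (hAB : Commute A B) (k : ℕ) :
    fromBlocks A B 0 A ^ k = fromBlocks (A ^ k) (k • (A ^ (k - 1) * B)) 0 (A ^ k) := by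
  induction k with
  | zero => simp [fromBlocks_one]
  | succ k ih =>
    have hcorner : A ^ k * B + k • (A ^ (k - 1) * B) * A = (k + 1) • (A ^ k * B) := by
      cases k with
      | zero => simp
      | succ k =>
        rw [smul_mul_assoc, Nat.add_sub_cancel, mul_assoc, ← hAB.eq, ← mul_assoc, ← pow_succ,
          add_comm, ← succ_nsmul]
    rw [pow_succ, ih, fromBlocks_multiply]
    simp only [mul_zero, zero_mul, add_zero, zero_add, ← pow_succ, hcorner, Nat.add_sub_cancel]

end Matrix

theorem nilpotent_index_block_t2_general {F : Type*} [Field F] [CharZero F] {n : ℕ}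
    (W : Matrix (Fin n) (Fin n) F) (r : ℕ)
    (h1 : W ^ r = 0) (h2 : W ^ (r - 1) ≠ 0)
    (X : Matrix (Fin n ⊕ Fin n) (Fin n ⊕ Fin n) F)
    (hX : X = Matrix.fromBlocks W (1 + W) 0 W) :
    X ^ (r + 1) = 0 ∧ X ^ r ≠ 0 := by
  have hr : r ≠ 0 := by rintro rfl; exact h2 h1
  have hcomm : Commute W (1 + W) := (Commute.one_right W).add_right (Commute.refl W)
  have hWr1 : W ^ (r + 1) = 0 := by rw [pow_succ, h1, zero_mul]
  have hcorner : W ^ (r - 1) * (1 + W) = W ^ (r - 1) := by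
    rw [mul_add, mul_one, ← pow_succ, Nat.sub_add_cancel (Nat.one_le_iff_ne_zero.2 hr), h1,
      add_zero]
  subst hX
  rw [Matrix.fromBlocks_pow_of_commute hcomm, Matrix.fromBlocks_pow_of_commute hcomm]
  constructor
  · simp [h1, hWr1]
  · intro hXr
    have hUpperRight := (Matrix.fromBlocks_inj.1 (hXr.trans Matrix.fromBlocks_zero.symm)).2.1
    rw [hcorner, ← Nat.cast_smul_eq_nsmul F] at hUpperRight
    exact h2 ((smul_eq_zero.1 hUpperRight).resolve_left (Nat.cast_ne_zero.2 hr))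

/-- Let `W ≠ 0` be nilpotent over a field of characteristic zero, `B = I + W`, and
`X = [[W, B], [0, W]]`.  Then the nilpotent index of `X` is one more than that of `W`:
if `W^r = 0` and `W^(r-1) ≠ 0`, then `X^(r+1) = 0` and `X^r ≠ 0`. -/
theorem nilpotent_index_block_t2 {F : Type*} [Field F] [CharZero F] {n : ℕ}
    (W : Matrix (Fin n) (Fin n) F) (hW : W ≠ 0) (r : ℕ) (hr : 1 ≤ r)
    (h1 : W ^ r = 0) (h2 : W ^ (r - 1) ≠ 0)
    (X : Matrix (Fin n ⊕ Fin n) (Fin n ⊕ Fin n) F)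
    (hX : X = Matrix.fromBlocks W (1 + W) 0 W) :
    X ^ (r + 1) = 0 ∧ X ^ r ≠ 0 :=
  nilpotent_index_block_t2_general W r h1 h2 X hX
end

section
/- Let W be an n×n nilpotent matrix over a field F of characteristic 0, B = I + W, and X = [[W, B],[0, W]]. Then for every k with 1 ≤ k, rank(X^k) = rank(W^(k-1)) + rank(W^(k+1)). -/
set_option maxHeartbeats 1000000

open Matrix LinearMap Module

section helpers
variable {F : Type*} [Field F]

lemma finrank_submodule_prod {M N : Type*} [AddCommGroup M] [AddCommGroup N]
    [Module F M] [Module F N] [FiniteDimensional F M] [FiniteDimensional F N]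
    (p : Submodule F M) (q : Submodule F N) :
    finrank F (p.prod q) = finrank F p + finrank F q := by
  have h1 : p.prod q = p.map (LinearMap.inl F M N) ⊔ q.map (LinearMap.inr F M N) :=
    (LinearMap.prod_eq_sup_map p q)
  have h2 : (p.map (LinearMap.inl F M N)) ⊓ (q.map (LinearMap.inr F M N)) = ⊥ := by
    rw [Submodule.map_inl, Submodule.map_inr, Submodule.prod_inf_prod]
    simp
  have h3 := Submodule.finrank_sup_add_finrank_inf_eq (p.map (LinearMap.inl F M N))
    (q.map (LinearMap.inr F M N))
  rw [h2] at h3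
  rw [finrank_bot F (M × N), add_zero] at h3
  rw [h1, h3,
    LinearEquiv.finrank_eq (Submodule.equivMapOfInjective (LinearMap.inl F M N) LinearMap.inl_injective p).symm,
    LinearEquiv.finrank_eq (Submodule.equivMapOfInjective (LinearMap.inr F M N) LinearMap.inr_injective q).symm]

lemma range_prodMap' {M N M' N' : Type*} [AddCommGroup M] [AddCommGroup N] [AddCommGroup M']
    [AddCommGroup N'] [Module F M] [Module F N] [Module F M'] [Module F N']
    (f : M →ₗ[F] M') (g : N →ₗ[F] N') :
    range (f.prodMap g) = (range f).prod (range g) := by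
  ext ⟨a, b⟩
  simp only [LinearMap.mem_range, Submodule.mem_prod, LinearMap.prodMap_apply, Prod.ext_iff,
    Prod.exists]
  constructor
  · rintro ⟨x, y, hx, hy⟩; exact ⟨⟨x, hx⟩, ⟨y, hy⟩⟩
  · rintro ⟨⟨x, hx⟩, ⟨y, hy⟩⟩; exact ⟨x, y, hx, hy⟩

lemma rank_fromBlocks_diag_s4 {m p : Type*} [Fintype m] [Fintype p] [DecidableEq m] [DecidableEq p]
    (A : Matrix m m F) (D : Matrix p p F) :
    (Matrix.fromBlocks A 0 0 D).rank = A.rank + D.rank := by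
  classical
  set e := LinearEquiv.sumArrowLequivProdArrow m p F F with he
  have hcomp : (Matrix.fromBlocks A 0 0 D).mulVecLin
      = e.symm.toLinearMap ∘ₗ ((A.mulVecLin.prodMap D.mulVecLin) ∘ₗ e.toLinearMap) := by
    ext x i
    cases i <;>
      simp [e, Matrix.mulVecLin, Matrix.mulVec, Matrix.fromBlocks, dotProduct,
        Fintype.sum_sum_type, LinearEquiv.sumArrowLequivProdArrow]
  rw [Matrix.rank, hcomp, LinearMap.range_comp, LinearMap.range_comp_of_range_eq_top _ (by
      rw [LinearMap.range_eq_top]; exact e.surjective),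
    LinearEquiv.finrank_map_eq, range_prodMap', finrank_submodule_prod]
  rfl

lemma rank_neg' {m : Type*} [Fintype m] [DecidableEq m] (A : Matrix m m F) :
    (-A).rank = A.rank := by
  have h : (-A) = (-1 : Matrix m m F) * A := by rw [neg_one_mul]
  rw [h, Matrix.rank_mul_eq_right_of_isUnit_det]
  · rw [show (-1 : Matrix m m F) = -(1 : Matrix m m F) from rfl, Matrix.det_neg]
    simp [isUnit_iff_ne_zero]

lemma block_pow {n : ℕ} (W B : Matrix (Fin n) (Fin n) F) (hWB : B * W = W * B) :
    ∀ j : ℕ, (Matrix.fromBlocks W B 0 W) ^ (j + 1) =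
      Matrix.fromBlocks (W ^ (j + 1)) (((j : F) + 1) • (W ^ j * B)) 0 (W ^ (j + 1)) := by
  intro j
  induction j with
  | zero => simp
  | succ i ih =>
    have h12 : W ^ (i + 1) * B + ((i : F) + 1) • (W ^ i * B) * W
        = ((↑(i + 1) : F) + 1) • (W ^ (i + 1) * B) := by
      rw [Matrix.smul_mul, mul_assoc, hWB, ← mul_assoc, ← pow_succ]
      push_cast
      module
    rw [pow_succ, ih, Matrix.fromBlocks_multiply, h12]
    simp [← pow_succ]

end helpers

/-- Let `W` be nilpotent over a field of characteristic zero, `B = I + W`, and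
`X = [[W, B], [0, W]]`.  Then `rank(X^k) = rank(W^(k-1)) + rank(W^(k+1))` for `k ≥ 1`. -/
theorem rank_pow_block_t2 {F : Type*} [Field F] [CharZero F] {n : ℕ}
    (W : Matrix (Fin n) (Fin n) F) (hW : IsNilpotent W)
    (X : Matrix (Fin n ⊕ Fin n) (Fin n ⊕ Fin n) F)
    (hX : X = Matrix.fromBlocks W (1 + W) 0 W) :
    ∀ k : ℕ, 1 ≤ k → (X ^ k).rank = (W ^ (k - 1)).rank + (W ^ (k + 1)).rank := by
  intro k hk
  obtain ⟨j, rfl⟩ : ∃ j, k = j + 1 := ⟨k - 1, (Nat.succ_pred_eq_of_pos hk).symm⟩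
  classical
  set B : Matrix (Fin n) (Fin n) F := 1 + W with hB
  have hWB : B * W = W * B := by rw [hB, add_mul, mul_add, one_mul, mul_one]
  have hBu : IsUnit B := hW.isUnit_one_add
  set u : (Matrix (Fin n) (Fin n) F)ˣ := hBu.unit with hu
  set C : Matrix (Fin n) (Fin n) F := ↑u⁻¹ with hCdef
  have huB : (u : Matrix (Fin n) (Fin n) F) = B := hBu.unit_spec
  have hBC : B * C = 1 := by rw [hCdef, ← huB]; exact u.mul_inv
  have hCB : C * B = 1 := by rw [hCdef, ← huB]; exact u.inv_mul
  have hCu : IsUnit C := (u⁻¹).isUnit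
  have hWC : W * C = C * W := by
    have h2 : Commute (u : Matrix (Fin n) (Fin n) F) W := by
      rw [huB]; exact hWB
    exact (h2.units_inv_left).eq.symm
  set c : F := (j : F) + 1 with hc
  have hc0 : c ≠ 0 := by
    rw [hc]
    exact_mod_cast Nat.cast_add_one_ne_zero (R := F) j
  have hXk : X ^ (j + 1)
      = Matrix.fromBlocks (W ^ (j + 1)) (c • (W ^ j * B)) 0 (W ^ (j + 1)) := by
    rw [hX, block_pow W B hWB j, hc]
  set L : Matrix (Fin n ⊕ Fin n) (Fin n ⊕ Fin n) F :=
    Matrix.fromBlocks 1 0 (-W) (c • B) with hL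
  set R : Matrix (Fin n ⊕ Fin n) (Fin n ⊕ Fin n) F :=
    Matrix.fromBlocks 1 0 (-(c⁻¹ • (C * W))) (c⁻¹ • C) with hR
  have hdetB : IsUnit B.det := (Matrix.isUnit_iff_isUnit_det B).mp hBu
  have hdetC : IsUnit C.det := (Matrix.isUnit_iff_isUnit_det C).mp hCu
  have hdetL : IsUnit L.det := by
    rw [hL, Matrix.det_fromBlocks_zero₁₂, Matrix.det_one, one_mul, Matrix.det_smul]
    exact (IsUnit.pow _ (isUnit_iff_ne_zero.mpr hc0)).mul hdetB
  have hdetR : IsUnit R.det := by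
    rw [hR, Matrix.det_fromBlocks_zero₁₂, Matrix.det_one, one_mul, Matrix.det_smul]
    exact (IsUnit.pow _ (isUnit_iff_ne_zero.mpr (inv_ne_zero hc0))).mul hdetC
  have key : L * (X ^ (j + 1)) * R
      = Matrix.fromBlocks 0 (W ^ j) (-(W ^ (j + 2))) 0 := by
    rw [hXk, hL, hR, Matrix.fromBlocks_multiply, Matrix.fromBlocks_multiply]
    simp only [Matrix.one_mul, Matrix.mul_one, Matrix.zero_mul, Matrix.mul_zero, add_zero,
      zero_add, Matrix.mul_neg, Matrix.neg_mul, Matrix.smul_mul, Matrix.mul_smul, smul_smul,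
      smul_neg, neg_neg, mul_inv_cancel₀ hc0, inv_mul_cancel₀ hc0, one_smul]
    have hcomm : W * (W ^ j * B) = B * W ^ (j + 1) := by
      rw [← mul_assoc, ← pow_succ']
      exact ((show Commute B W from hWB).pow_right (j + 1)).eq.symm
    have hinner : -(c • (W * (W ^ j * B))) + c • (B * W ^ (j + 1))
        = (0 : Matrix (Fin n) (Fin n) F) := by
      rw [hcomm, neg_add_cancel]
    have h1 : W ^ j * B * (C * W) = W ^ (j + 1) := by
      rw [mul_assoc, ← mul_assoc B C W, hBC, one_mul, ← pow_succ]
    have h2 : W ^ j * B * C = W ^ j := by rw [mul_assoc, hBC, mul_one]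
    rw [hinner, h1, h2]
    simp [← pow_succ']
  have hrank : (X ^ (j + 1)).rank = (Matrix.fromBlocks 0 (W ^ j) (-(W ^ (j + 2))) 0).rank := by
    rw [← key, Matrix.rank_mul_eq_left_of_isUnit_det R (L * X ^ (j + 1)) hdetR,
      Matrix.rank_mul_eq_right_of_isUnit_det L (X ^ (j + 1)) hdetL]
  have hswap : Matrix.fromBlocks (0 : Matrix (Fin n) (Fin n) F) (W ^ j) (-(W ^ (j + 2))) 0
      = (Matrix.fromBlocks (W ^ j) 0 0 (-(W ^ (j + 2)))).submatrix
        (Equiv.refl (Fin n ⊕ Fin n)) (Equiv.sumComm (Fin n) (Fin n)) := by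
    ext i l
    cases i <;> cases l <;> rfl
  rw [hrank, hswap, Matrix.rank_submatrix, rank_fromBlocks_diag_s4, rank_neg',
    Nat.add_sub_cancel]
end

section
/- Let W be an n×n nilpotent matrix over a field F of characteristic 0, with Weyr structure components m_i = rank(W^(i-1)) - rank(W^i) for 1 ≤ i ≤ r (r the nilpotent index). Let C = [[B, B],[0, B]] with B = I + W and r > 1. Then the Weyr structure components n_i = rank((C-I)^(i-1)) - rank((C-I)^i) of C at eigenvalue 1 satisfy: n_1 = m_1 + m_2, n_i = m_{i-1} + m_{i+1} for 2 ≤ i ≤ r-1, n_r = m_{r-1}, and n_{r+1} = m_r. -/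
open Matrix

lemma rank_fromBlocks_diag_aux {F : Type*} [Field F] {N : ℕ}
    (A D : Matrix (Fin N) (Fin N) F) :
    (Matrix.fromBlocks A 0 0 D).rank = A.rank + D.rank := by
  classical
  let e : ((Fin N ⊕ Fin N) → F) ≃ₗ[F] (Fin N → F) × (Fin N → F) :=
    LinearEquiv.sumArrowLequivProdArrow _ _ F F
  have key : (Matrix.fromBlocks A 0 0 D).mulVecLin
      = e.symm.toLinearMap ∘ₗ (A.mulVecLin.prodMap D.mulVecLin) ∘ₗ e.toLinearMap := by
    apply LinearMap.ext
    intro v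
    simp [e, Matrix.fromBlocks_mulVec, LinearEquiv.sumArrowLequivProdArrow,
      Equiv.sumArrowEquivProdArrow, Function.comp]
  have hrange : LinearMap.range (A.mulVecLin.prodMap D.mulVecLin)
      = (LinearMap.range A.mulVecLin).prod (LinearMap.range D.mulVecLin) := by
    ext ⟨x, y⟩
    constructor
    · rintro ⟨⟨a, b⟩, h⟩
      rw [LinearMap.prodMap_apply] at h
      exact ⟨⟨a, congrArg Prod.fst h⟩, ⟨b, congrArg Prod.snd h⟩⟩
    · rintro ⟨⟨a, ha⟩, ⟨b, hb⟩⟩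
      exact ⟨(a, b), by rw [LinearMap.prodMap_apply]; exact Prod.ext ha hb⟩
  set p := LinearMap.range A.mulVecLin
  set q := LinearMap.range D.mulVecLin
  have heqv : (p.prod q) ≃ₗ[F] p × q :=
    { toFun := fun x => (⟨x.1.1, x.2.1⟩, ⟨x.1.2, x.2.2⟩)
      invFun := fun x => ⟨(x.1.1, x.2.1), ⟨x.1.2, x.2.2⟩⟩
      map_add' := fun _ _ => rfl
      map_smul' := fun _ _ => rfl
      left_inv := fun _ => rfl
      right_inv := fun _ => rfl }
  have hfr : Module.finrank F (p.prod q) = Module.finrank F p + Module.finrank F q := by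
    rw [heqv.finrank_eq, Module.finrank_prod]
  rw [Matrix.rank, key, LinearMap.range_comp, LinearMap.range_comp,
    LinearEquiv.range, Submodule.map_top, LinearEquiv.finrank_map_eq, hrange, hfr]
  rfl

/-- Theorem 3 (case `t = 2`, nonzero eigenvalue): if `W` is nilpotent of index `r > 1`,
`B = I + W`, `C = [[B, B], [0, B]]`, with Weyr components
`m i = rank(W^(i-1)) - rank(W^i)` and `n i = rank((C-I)^(i-1)) - rank((C-I)^i)`, then
`n 1 = m 1 + m 2`, `n i = m (i-1) + m (i+1)` for `2 ≤ i ≤ r - 1`, `n r = m (r-1)`,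
and `n (r+1) = m r`. -/
theorem weyr_structure_block_t2 {F : Type*} [Field F] [CharZero F] {N : ℕ}
    (W : Matrix (Fin N) (Fin N) F) (r : ℕ) (hr : 1 < r)
    (h1 : W ^ r = 0) (h2 : W ^ (r - 1) ≠ 0)
    (C : Matrix (Fin N ⊕ Fin N) (Fin N ⊕ Fin N) F)
    (hC : C = Matrix.fromBlocks (1 + W) (1 + W) 0 (1 + W))
    (m nn : ℕ → ℕ)
    (hm : ∀ i : ℕ, m i = (W ^ (i - 1)).rank - (W ^ i).rank)
    (hn : ∀ i : ℕ, nn i = ((C - 1) ^ (i - 1)).rank - ((C - 1) ^ i).rank) :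
    nn 1 = m 1 + m 2 ∧
    (∀ i : ℕ, 2 ≤ i → i ≤ r - 1 → nn i = m (i - 1) + m (i + 1)) ∧
    nn r = m (r - 1) ∧
    nn (r + 1) = m r := by
  classical
  set B : Matrix (Fin N) (Fin N) F := 1 + W with hB
  set B' : Matrix (Fin N) (Fin N) F := ∑ j ∈ Finset.range r, (-W) ^ j with hB'
  have hgeom := geom_sum_mul (-W) r
  have hB'B : B' * B = 1 := by
    have hneg : (-W - 1 : Matrix (Fin N) (Fin N) F) = -(1 + W) := by abel
    rw [hneg, mul_neg, neg_pow, h1, mul_zero, zero_sub] at hgeom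
    exact neg_injective hgeom
  have hBB' : B * B' = 1 := mul_eq_one_comm.mp hB'B
  have hWB : Commute W B := by rw [hB]; exact (Commute.one_right W).add_right (Commute.refl W)
  have hWB' : Commute W B' := by
    rw [hB']
    exact Commute.sum_right _ _ _ fun j _ => ((Commute.refl W).neg_right).pow_right j
  have hCW : C - 1 = Matrix.fromBlocks W B 0 W := by
    rw [hC, ← Matrix.fromBlocks_one]
    ext (i | i) (j | j) <;>
      simp [Matrix.fromBlocks, Matrix.sub_apply, hB, Matrix.add_apply]
  have hpowC : ∀ k : ℕ, 1 ≤ k →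
      (C - 1) ^ k = Matrix.fromBlocks (W ^ k) ((k : F) • (B * W ^ (k - 1))) 0 (W ^ k) := by
    intro k hk
    induction k with
    | zero => omega
    | succ k ih =>
      rcases Nat.eq_or_lt_of_le hk with h | h
      · rw [← h]
        simp [hCW]
      · have hk1 : 1 ≤ k := by omega
        rw [pow_succ, ih hk1, hCW, Matrix.fromBlocks_multiply]
        have e1 : (B * W ^ (k - 1)) * W = B * W ^ k := by
          rw [mul_assoc, ← pow_succ]
          congr 2
          omega
        have e2 : W ^ k * B = B * W ^ k := hWB.pow_left k
        rw [Matrix.mul_zero, Matrix.zero_mul, Matrix.zero_mul, Matrix.mul_zero,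
          add_zero, zero_add, zero_add, ← pow_succ, smul_mul_assoc, e1, e2]
        have e3 : ((↑(k+1) : F)) • (B * W ^ k) = B * W ^ k + (k:F) • (B * W ^ k) := by
          rw [Nat.cast_succ, add_smul, one_smul, add_comm]
        rw [Nat.add_sub_cancel, e3]
  have hrank : ∀ k : ℕ, 1 ≤ k →
      ((C - 1) ^ k).rank = (W ^ (k - 1)).rank + (W ^ (k + 1)).rank := by
    intro k hk
    have hk0 : (k : F) ≠ 0 := Nat.cast_ne_zero.mpr (by omega)
    set U : Matrix (Fin N) (Fin N) F := (k : F) • B with hU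
    set V : Matrix (Fin N) (Fin N) F := (k : F)⁻¹ • B' with hV
    have hUV : U * V = 1 := by
      rw [hU, hV, smul_mul_assoc, mul_smul_comm, smul_smul, hBB',
        mul_inv_cancel₀ hk0, one_smul]
    have hVU : V * U = 1 := by
      rw [hU, hV, smul_mul_assoc, mul_smul_comm, smul_smul, hB'B,
        inv_mul_cancel₀ hk0, one_smul]
    have hUunit : IsUnit U := ⟨⟨U, V, hUV, hVU⟩, rfl⟩
    have hVunit : IsUnit V := ⟨⟨V, U, hVU, hUV⟩, rfl⟩
    have hUdet : IsUnit U.det := (Matrix.isUnit_iff_isUnit_det U).mp hUunit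
    have hWV : Commute W V := (hWB'.smul_right _)
    have hWU : Commute W U := (hWB.smul_right _)
    set D : Matrix (Fin N) (Fin N) F := W ^ (k - 1) with hD
    set A : Matrix (Fin N) (Fin N) F := W ^ k with hA
    have hDW : D * W = A := by rw [hD, hA, ← pow_succ]; congr 1; omega
    have hWD : W * D = A := by rw [hD, hA, ← pow_succ']; congr 1; omega
    have hM : (C - 1) ^ k = Matrix.fromBlocks A (U * D) 0 A := by
      rw [hpowC k hk, hU, hD, hA, smul_mul_assoc]
    have hDV : D * V = V * D := ((hWV.symm).pow_right (k - 1)).symm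
    have hAV : A * V = V * A := ((hWV.symm).pow_right k).symm
    set P : Matrix (Fin N ⊕ Fin N) (Fin N ⊕ Fin N) F :=
      Matrix.fromBlocks 1 0 (-(W * V)) 1 with hP
    set Q : Matrix (Fin N ⊕ Fin N) (Fin N ⊕ Fin N) F :=
      Matrix.fromBlocks 1 0 (-(V * W)) 1 with hQ
    have hPdet : IsUnit P.det := by
      rw [hP, Matrix.det_fromBlocks_zero₁₂, Matrix.det_one, one_mul]
      exact isUnit_one
    have hQdet : IsUnit Q.det := by
      rw [hQ, Matrix.det_fromBlocks_zero₁₂, Matrix.det_one, one_mul]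
      exact isUnit_one
    have e1 : U * D * (V * W) = A := by
      rw [mul_assoc U D (V * W), ← mul_assoc D V W, hDV, mul_assoc V D W, hDW,
        ← mul_assoc, hUV, one_mul]
    have e2 : A * (V * W) = V * W ^ (k + 1) := by
      rw [← mul_assoc, hAV, mul_assoc, hA, ← pow_succ]
    have e3 : W * V * (U * D) = A := by
      rw [mul_assoc, ← mul_assoc V U D, hVU, one_mul, hWD]
    have hprod : P * ((C - 1) ^ k * Q) =
        Matrix.fromBlocks 0 (U * D) (-(V * W ^ (k + 1))) 0 := by
      rw [hM, hP, hQ, Matrix.fromBlocks_multiply, Matrix.fromBlocks_multiply]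
      rw [Matrix.mul_one, Matrix.mul_one, Matrix.mul_zero, Matrix.mul_zero,
        Matrix.zero_mul, Matrix.zero_mul, Matrix.one_mul, Matrix.one_mul]
      rw [Matrix.mul_neg, Matrix.mul_neg, e1, e2]
      simp only [add_zero, zero_add, add_neg_cancel, Matrix.zero_mul, Matrix.mul_zero,
        Matrix.one_mul, Matrix.neg_mul, Matrix.mul_neg, e3, neg_neg]
      rw [Matrix.mul_one, e3, neg_add_cancel]
    have hstep1 : ((C - 1) ^ k).rank
        = (Matrix.fromBlocks 0 (U * D) (-(V * W ^ (k + 1))) 0).rank := by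
      rw [← hprod, Matrix.rank_mul_eq_right_of_isUnit_det P _ hPdet,
        Matrix.rank_mul_eq_left_of_isUnit_det Q _ hQdet]
    set S : Matrix (Fin N ⊕ Fin N) (Fin N ⊕ Fin N) F :=
      Matrix.fromBlocks 0 1 1 0 with hS
    have hSS : S * S = 1 := by
      rw [hS, Matrix.fromBlocks_multiply]
      simp [Matrix.fromBlocks_one]
    have hSdet : IsUnit S.det := (Matrix.isUnit_iff_isUnit_det S).mp ⟨⟨S, S, hSS, hSS⟩, rfl⟩
    have hswap : Matrix.fromBlocks (U * D) 0 0 (-(V * W ^ (k + 1))) * S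
        = Matrix.fromBlocks 0 (U * D) (-(V * W ^ (k + 1))) 0 := by
      rw [hS, Matrix.fromBlocks_multiply]
      simp
    have hnegV : IsUnit (-V) := by
      refine ⟨⟨-V, -U, ?_, ?_⟩, rfl⟩
      · rw [neg_mul_neg, hVU]
      · rw [neg_mul_neg, hUV]
    have hnegVdet : IsUnit (-V).det := (Matrix.isUnit_iff_isUnit_det _).mp hnegV
    have hstep2 : (-(V * W ^ (k + 1))).rank = (W ^ (k + 1)).rank := by
      rw [← Matrix.neg_mul, Matrix.rank_mul_eq_right_of_isUnit_det _ _ hnegVdet]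
    rw [hstep1, ← hswap, Matrix.rank_mul_eq_left_of_isUnit_det S _ hSdet,
      rank_fromBlocks_diag_aux, Matrix.rank_mul_eq_right_of_isUnit_det U D hUdet, hstep2]
  -- basic rank facts about powers of W
  have hmono : ∀ j : ℕ, (W ^ (j + 1)).rank ≤ (W ^ j).rank := by
    intro j
    rw [pow_succ]
    exact Matrix.rank_mul_le_left _ _
  have hleN : ∀ j : ℕ, (W ^ j).rank ≤ N := by
    intro j
    simpa using Matrix.rank_le_card_width (W ^ j)
  have hzero : ∀ j : ℕ, r ≤ j → (W ^ j).rank = 0 := by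
    intro j hj
    obtain ⟨d, rfl⟩ := Nat.exists_eq_add_of_le hj
    rw [pow_add, h1, Matrix.zero_mul, Matrix.rank_zero]
  have hrank0 : ((C - 1) ^ 0).rank = N + N := by
    rw [pow_zero, Matrix.rank_one]
    simp
  obtain ⟨s, rfl⟩ : ∃ s, r = s + 2 := ⟨r - 2, by omega⟩
  refine ⟨?_, ?_, ?_, ?_⟩
  · -- nn 1 = m 1 + m 2
    have k1 := hrank 1 le_rfl
    have e1 : (1 : ℕ) - 1 = 0 := rfl
    have e2 : (1 : ℕ) + 1 = 2 := rfl
    have e3 : (2 : ℕ) - 1 = 1 := rfl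
    rw [e1, e2] at k1
    have k0 : (W ^ (0:ℕ)).rank = N := by rw [pow_zero, Matrix.rank_one]; simp
    rw [hn 1, hm 1, hm 2, e1, e3, k1, hrank0, k0]
    have hba := hmono 0
    have hcb := hmono 1
    have hbN := hleN 1
    rw [pow_zero] at hba
    rw [Matrix.rank_one] at hba
    simp only [Fintype.card_fin] at hba
    set b := (W ^ (1:ℕ)).rank
    set c := (W ^ (2:ℕ)).rank
    omega
  · -- middle components
    intro i h2i h3i
    obtain ⟨j, rfl⟩ : ∃ j, i = j + 2 := ⟨i - 2, by omega⟩
    have k1 := hrank (j + 1) (by omega)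
    have k2 := hrank (j + 2) (by omega)
    have e1 : j + 1 - 1 = j := by omega
    have e2 : j + 1 + 1 = j + 2 := by omega
    have e3 : j + 2 - 1 = j + 1 := by omega
    have e4 : j + 2 + 1 = j + 3 := by omega
    have e5 : j + 3 - 1 = j + 2 := by omega
    rw [e1, e2] at k1
    rw [e3, e4] at k2
    rw [e3, e4, hn (j + 2), hm (j + 1), hm (j + 3), e3, k1, k2, e1, e5]
    have hba := hmono j
    have hcb := hmono (j + 1)
    have hdc := hmono (j + 2)
    rw [e2] at hcb
    rw [e4] at hdc
    set a := (W ^ j).rank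
    set b := (W ^ (j + 1)).rank
    set c := (W ^ (j + 2)).rank
    set d := (W ^ (j + 3)).rank
    omega
  · -- nn r = m (r - 1)
    have k1 := hrank (s + 1) (by omega)
    have k2 := hrank (s + 2) (by omega)
    have e1 : s + 1 - 1 = s := by omega
    have e2 : s + 1 + 1 = s + 2 := by omega
    have e3 : s + 2 - 1 = s + 1 := by omega
    have e4 : s + 2 + 1 = s + 3 := by omega
    rw [e1, e2] at k1
    rw [e3, e4] at k2
    have z2 : (W ^ (s + 2)).rank = 0 := hzero _ le_rfl
    have z3 : (W ^ (s + 3)).rank = 0 := hzero _ (by omega)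
    rw [e3, hn (s + 2), hm (s + 1), e3, k1, k2, e1, z2, z3]
    have hba := hmono s
    set a := (W ^ s).rank
    set b := (W ^ (s + 1)).rank
    omega
  · -- nn (r+1) = m r
    have k2 := hrank (s + 2) (by omega)
    have k3 := hrank (s + 3) (by omega)
    have e3 : s + 2 - 1 = s + 1 := by omega
    have e4 : s + 2 + 1 = s + 3 := by omega
    have e5 : s + 3 - 1 = s + 2 := by omega
    have e6 : s + 3 + 1 = s + 4 := by omega
    rw [e3, e4] at k2
    rw [e5, e6] at k3
    have z2 : (W ^ (s + 2)).rank = 0 := hzero _ le_rfl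
    have z3 : (W ^ (s + 3)).rank = 0 := hzero _ (by omega)
    have z4 : (W ^ (s + 4)).rank = 0 := hzero _ (by omega)
    rw [e4, hn (s + 3), hm (s + 2), e5, e3, k2, k3, z2, z3, z4]
    omega
end

section
/- Define the Sierpinski matrices over a field F by B_0 = (1) and B_{n+1} = [[B_n, B_n],[0, B_n]]. Then B_n is a 2^n × 2^n matrix with single eigenvalue 1, and over a field of characteristic 0, the nilpotent index of B_n - I is n + 1. -/
/-!
Write `N = B n - 1`. The block recursion gives `B (n+1) - 1 = [[N, N + 1], [0, N]]`, and since
`N` and `N + 1` commute, its `(k+1)`-st power is `[[N^(k+1), (k+1) (N+1) N^k], [0, N^(k+1)]]`.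
Inductively `N^(n+1) = 0`, so the power `n + 2` of `B (n+1) - 1` vanishes, while at power `n + 1`
its corner block is `(n+1) (N+1) N^n = (n+1) N^n ≠ 0` in characteristic zero. Being unipotent,
`B n` has no eigenvalue other than `1`.
-/

/-- The `n`-th Sierpinski matrix: `B 0 = (1)` and `B (n+1) = [[B n, B n], [0, B n]]`. -/
def sierpinski (F : Type*) [Zero F] [One F] : (n : ℕ) → Matrix (Fin (2 ^ n)) (Fin (2 ^ n)) F
  | 0 => 1
  | n + 1 =>
    Matrix.reindex (finSumFinEquiv.trans (finCongr (by rw [pow_succ, mul_two])))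
      (finSumFinEquiv.trans (finCongr (by rw [pow_succ, mul_two])))
      (Matrix.fromBlocks (sierpinski F n) (sierpinski F n) 0 (sierpinski F n))

open Matrix

theorem Matrix.eq_one_of_mulVec_eq_smul_of_isNilpotent_sub_one {R ι : Type*} [CommRing R]
    [IsDomain R] [Fintype ι] [DecidableEq ι] {A : Matrix ι ι R} (hA : IsNilpotent (A - 1))
    {μ : R} {v : ι → R} (hv : v ≠ 0) (hAv : A *ᵥ v = μ • v) : μ = 1 := by
  have hN : Module.End.HasEigenvalue (toLin' (A - 1)) (μ - 1) :=
    Module.End.hasEigenvalue_of_hasEigenvector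
      ⟨Module.End.mem_eigenspace_iff.mpr (by simp [hAv, sub_smul]), hv⟩
  exact sub_eq_zero.mp (hN.isNilpotent_of_isNilpotent (hA.map toLinAlgEquiv')).eq_zero

theorem Matrix.fromBlocks_pow_succ_of_commute {R ι : Type*} [Semiring R] [Fintype ι]
    [DecidableEq ι] {A C : Matrix ι ι R} (h : Commute A C) (k : ℕ) :
    fromBlocks A C 0 A ^ (k + 1) =
      fromBlocks (A ^ (k + 1)) ((k + 1) • (C * A ^ k)) 0 (A ^ (k + 1)) := by
  induction k with
  | zero => simp
  | succ k ih =>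
    have hC : A ^ (k + 1) * C + (k + 1) • (C * A ^ k) * A = (k + 2) • (C * A ^ (k + 1)) := by
      rw [(h.pow_left (k + 1)).eq, smul_mul_assoc, mul_assoc, ← pow_succ]
      exact (succ_nsmul' _ _).symm
    rw [pow_succ, ih, fromBlocks_multiply]
    simp only [Matrix.mul_zero, Matrix.zero_mul, add_zero, zero_add, ← pow_succ, hC]

section Sierpinski

variable {R : Type*}

def sierpinskiBlockEquiv (n : ℕ) : Fin (2 ^ n) ⊕ Fin (2 ^ n) ≃ Fin (2 ^ (n + 1)) :=
  finSumFinEquiv.trans (finCongr (Nat.two_pow_succ n).symm)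

theorem sierpinski_succ [Semiring R] (n : ℕ) :
    sierpinski R (n + 1) = reindexRingEquiv R (sierpinskiBlockEquiv n)
      (fromBlocks (sierpinski R n) (sierpinski R n) 0 (sierpinski R n)) :=
  rfl

theorem sierpinski_succ_sub_one [Ring R] (n : ℕ) :
    sierpinski R (n + 1) - 1 = reindexRingEquiv R (sierpinskiBlockEquiv n)
      (fromBlocks (sierpinski R n - 1) (sierpinski R n) 0 (sierpinski R n - 1)) := by
  rw [sierpinski_succ, ← map_one (reindexRingEquiv R (sierpinskiBlockEquiv n)), ← map_sub,
    ← fromBlocks_one, sub_eq_add_neg, fromBlocks_neg, fromBlocks_add]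
  simp [sub_eq_add_neg]

theorem sierpinski_succ_sub_one_pow_succ [Ring R] (n k : ℕ) :
    (sierpinski R (n + 1) - 1) ^ (k + 1) = reindexRingEquiv R (sierpinskiBlockEquiv n)
      (fromBlocks ((sierpinski R n - 1) ^ (k + 1))
        ((k + 1) • (sierpinski R n * (sierpinski R n - 1) ^ k)) 0
        ((sierpinski R n - 1) ^ (k + 1))) := by
  rw [sierpinski_succ_sub_one, ← map_pow,
    fromBlocks_pow_succ_of_commute ((Commute.refl _).sub_left (Commute.one_left _))]

theorem sierpinski_sub_one_pow_succ [Ring R] (n : ℕ) : (sierpinski R n - 1) ^ (n + 1) = 0 := by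
  induction n with
  | zero => simp [sierpinski]
  | succ n ih =>
    rw [sierpinski_succ_sub_one_pow_succ, pow_succ (sierpinski R n - 1) (n + 1), ih]
    simp

theorem sierpinski_sub_one_pow_ne_zero [Ring R] [Nontrivial R] [IsAddTorsionFree R] (n : ℕ) :
    (sierpinski R n - 1) ^ n ≠ 0 := by
  induction n with
  | zero => simp [sierpinski]
  | succ n ih =>
    have hcorner : sierpinski R n * (sierpinski R n - 1) ^ n = (sierpinski R n - 1) ^ n := by
      rw [← sub_eq_zero, ← sub_one_mul, ← pow_succ', sierpinski_sub_one_pow_succ]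
    rw [sierpinski_succ_sub_one_pow_succ, hcorner]
    intro h
    rw [map_eq_zero_iff _ (reindexRingEquiv R _).injective, ← fromBlocks_zero, fromBlocks_inj] at h
    exact ih (Matrix.ext fun i j =>
      (smul_eq_zero.mp (congr_fun₂ h.2.1 i j)).resolve_left n.succ_ne_zero)

end Sierpinski

/-- The Sierpinski matrix `B n` has the single eigenvalue `1`, and over a field of
characteristic zero the nilpotent index of `B n - I` is `n + 1`. -/
theorem sierpinski_single_eigenvalue_and_index {F : Type*} [Field F] [CharZero F] (n : ℕ) :
    (∀ μ : F, (∃ v : Fin (2 ^ n) → F, v ≠ 0 ∧ (sierpinski F n).mulVec v = μ • v) → μ = 1) ∧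
    (sierpinski F n - 1) ^ (n + 1) = 0 ∧ (sierpinski F n - 1) ^ n ≠ 0 :=
  ⟨fun _ ⟨_, hv, hμ⟩ => eq_one_of_mulVec_eq_smul_of_isNilpotent_sub_one
      ⟨n + 1, sierpinski_sub_one_pow_succ n⟩ hv hμ,
    sierpinski_sub_one_pow_succ n, sierpinski_sub_one_pow_ne_zero n⟩
end

section
/- Over a field F of characteristic 0, the Weyr structure of the n-th Sierpinski matrix B_n at its eigenvalue 1 is the multiset of binomial coefficients C(n, k), k = 0, ..., n, arranged in non-increasing order; equivalently, the multiset {rank((B_n - I)^(i-1)) - rank((B_n - I)^i) : 1 ≤ i ≤ n+1} equals the multiset {C(n,k) : 0 ≤ k ≤ n}. -/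
open Matrix Module

lemma LinearMap.finrank_range_prodMap {K V₁ V₂ W₁ W₂ : Type*} [DivisionRing K]
    [AddCommGroup V₁] [AddCommGroup V₂] [AddCommGroup W₁] [AddCommGroup W₂]
    [Module K V₁] [Module K V₂] [Module K W₁] [Module K W₂]
    [FiniteDimensional K W₁] [FiniteDimensional K W₂] (f : V₁ →ₗ[K] W₁) (g : V₂ →ₗ[K] W₂) :
    finrank K (f.prodMap g).range = finrank K f.range + finrank K g.range := by
  rw [range_prodMap, ← finrank_prod, ← finrank_range_of_inj
    (f := f.range.subtype.prodMap g.range.subtype)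
    (Subtype.val_injective.prodMap Subtype.val_injective),
    range_prodMap, Submodule.range_subtype, Submodule.range_subtype]

namespace Matrix

lemma rank_pow_eq_of_semiconjBy {R m : Type*} [CommRing R] [Fintype m] [DecidableEq m]
    {S M J : Matrix m m R} (hS : IsUnit S.det) (h : SemiconjBy S M J) (k : ℕ) :
    (M ^ k).rank = (J ^ k).rank := by
  rw [← rank_mul_eq_right_of_isUnit_det S _ hS, (h.pow_right k).eq,
    rank_mul_eq_left_of_isUnit_det S _ hS]

variable {F : Type*} [Field F] {m n m' n' : Type*}
  [Fintype m] [Fintype n] [Fintype m'] [Fintype n']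

lemma rank_fromBlocks_zero₁₂_zero₂₁ (A : Matrix m m' F) (D : Matrix n n' F) :
    (fromBlocks A 0 0 D).rank = A.rank + D.rank := by
  let e := LinearEquiv.sumArrowLequivProdArrow m' n' F F
  let e' := LinearEquiv.sumArrowLequivProdArrow m n F F
  have hlin : (fromBlocks A 0 0 D).mulVecLin =
      e'.symm.toLinearMap ∘ₗ (A.mulVecLin.prodMap D.mulVecLin) ∘ₗ e.toLinearMap := by
    refine LinearMap.ext fun v => ?_
    conv_lhs => rw [mulVecLin_apply, ← Sum.elim_comp_inl_inr v, fromBlocks_mulVec]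
    simp only [zero_mulVec, add_zero, zero_add]
    rfl
  rw [rank, hlin, LinearMap.range_comp, LinearMap.range_comp_of_range_eq_top _ e.range,
    LinearEquiv.finrank_map_eq, LinearMap.finrank_range_prodMap, rank, rank]

lemma rank_fromBlocks_zero₁₁_zero₂₂ (B : Matrix m n' F) (C : Matrix n m' F) :
    (fromBlocks 0 B C 0).rank = B.rank + C.rank := by
  rw [← rank_fromBlocks_zero₁₂_zero₂₁, ← rank_reindex (Equiv.refl _) (Equiv.sumComm _ _)]
  congr 1
  ext (i | i) (j | j) <;> rfl

variable [DecidableEq m]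

lemma fromBlocks_one_pow_succ (N : Matrix m m F) (k : ℕ) :
    fromBlocks N 1 0 N ^ (k + 1) =
      fromBlocks (N ^ (k + 1)) ((k + 1 : F) • N ^ k) 0 (N ^ (k + 1)) := by
  induction k with
  | zero => simp
  | succ k ih =>
    rw [pow_succ, ih, fromBlocks_multiply]
    simp only [Matrix.mul_zero, Matrix.zero_mul, add_zero, zero_add, Matrix.mul_one, smul_mul,
      ← pow_succ]
    congr 1
    push_cast
    module

lemma rank_fromBlocks_pow_smul_pow (N : Matrix m m F) {c : F} (hc : c ≠ 0) (k : ℕ) :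
    (fromBlocks (N ^ (k + 1)) (c • N ^ k) 0 (N ^ (k + 1))).rank =
      (N ^ k).rank + (N ^ (k + 2)).rank := by
  let L : Matrix (m ⊕ m) (m ⊕ m) F := fromBlocks 1 0 (-c⁻¹ • N) 1
  have hL : IsUnit L.det := by simp [L]
  have hLML : L * (fromBlocks (N ^ (k + 1)) (c • N ^ k) 0 (N ^ (k + 1)) * L) =
      fromBlocks 0 (c • N ^ k) (-c⁻¹ • N ^ (k + 2)) 0 := by
    simp only [L, fromBlocks_multiply]
    congr 1 <;> simp [pow_succ, ← pow_mul_comm', smul_smul, hc]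
  rw [← rank_mul_eq_left_of_isUnit_det L _ hL, ← rank_mul_eq_right_of_isUnit_det L _ hL, hLML,
    rank_fromBlocks_zero₁₁_zero₂₂,
    rank_smul_of_mem_nonZeroDivisors _ (mem_nonZeroDivisors_of_ne_zero hc),
    rank_smul_of_mem_nonZeroDivisors _ (mem_nonZeroDivisors_of_ne_zero (by simpa using hc))]

lemma rank_fromBlocks_one_pow_succ [CharZero F] (N : Matrix m m F) (k : ℕ) :
    (fromBlocks N 1 0 N ^ (k + 1)).rank = (N ^ k).rank + (N ^ (k + 2)).rank := by
  rw [fromBlocks_one_pow_succ, rank_fromBlocks_pow_smul_pow N (Nat.cast_add_one_ne_zero k)]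

end Matrix

section ChooseHalfSum

open Finset

def chooseHalfSum (n t : ℕ) : ℕ := ∑ j ∈ range t, n.choose (j / 2)

lemma chooseHalfSum_succ_add_two (n t : ℕ) :
    chooseHalfSum (n + 1) (t + 2) = chooseHalfSum n (t + 2) + chooseHalfSum n t := by
  induction t with
  | zero => simp [chooseHalfSum, sum_range_succ]
  | succ t ih =>
    have hdiv : (t + 2) / 2 = t / 2 + 1 := by omega
    simp only [chooseHalfSum, sum_range_succ] at ih ⊢
    rw [ih, hdiv, Nat.choose_succ_succ']
    ring

lemma chooseHalfSum_succ (n t : ℕ) :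
    chooseHalfSum (n + 1) t = chooseHalfSum n t + chooseHalfSum n (t - 2) := by
  rcases t with _ | _ | t
  · rfl
  · simp [chooseHalfSum]
  · exact chooseHalfSum_succ_add_two n t

lemma map_choose_sub_div_two (n : ℕ) :
    (Multiset.range (n + 1)).map (fun i => n.choose ((n - i) / 2)) =
      (Multiset.range (n + 1)).map n.choose := by
  refine Multiset.map_eq_map_of_bij_of_nodup _ _ (Multiset.nodup_range _)
    (Multiset.nodup_range _) (fun i _ => if Even (n - i) then (n - i) / 2 else n - (n - i) / 2)
    ?_ ?_ ?_ ?_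
  · intro i hi
    simp only [Multiset.mem_range] at hi ⊢
    split_ifs <;> omega
  · intro i hi j hj hij
    simp only [Multiset.mem_range, Nat.even_iff] at hi hj hij
    split_ifs at hij <;> omega
  · intro k hk
    rw [Multiset.mem_range] at hk
    by_cases h : 2 * k ≤ n
    · refine ⟨n - 2 * k, Multiset.mem_range.2 (by omega), ?_⟩
      simp only [Nat.even_iff]
      split_ifs <;> omega
    · refine ⟨2 * k - n - 1, Multiset.mem_range.2 (by omega), ?_⟩
      simp only [Nat.even_iff]
      split_ifs <;> omega
  · intro i _
    split_ifs
    · rfl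
    · rw [Nat.choose_symm (by omega)]

lemma chooseHalfSum_succ_self (n : ℕ) : chooseHalfSum n (n + 1) = 2 ^ n := by
  rw [chooseHalfSum, ← sum_range_reflect, ← Nat.sum_range_choose, sum_eq_multiset_sum,
    sum_eq_multiset_sum]
  exact congrArg Multiset.sum (map_choose_sub_div_two n)

end ChooseHalfSum

section Sierpinski

variable {F : Type*} [Field F]

def finSumFinTwoPowEquiv (n : ℕ) : Fin (2 ^ n) ⊕ Fin (2 ^ n) ≃ Fin (2 ^ (n + 1)) :=
  finSumFinEquiv.trans (finCongr (by rw [pow_succ, mul_two]))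

lemma sierpinski_succ_s8 (n : ℕ) :
    sierpinski F (n + 1) = reindexAlgEquiv F F (finSumFinTwoPowEquiv n)
      (fromBlocks (sierpinski F n) (sierpinski F n) 0 (sierpinski F n)) :=
  rfl

lemma det_sierpinski (n : ℕ) : (sierpinski F n).det = 1 := by
  induction n with
  | zero => exact det_one
  | succ n ih =>
    rw [sierpinski_succ_s8, coe_reindexAlgEquiv, det_reindex_self, det_fromBlocks_zero₂₁, ih,
      mul_one]

lemma rank_sierpinski_succ_sub_one_pow_succ [CharZero F] (n k : ℕ) :
    ((sierpinski F (n + 1) - 1) ^ (k + 1)).rank =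
      ((sierpinski F n - 1) ^ k).rank + ((sierpinski F n - 1) ^ (k + 2)).rank := by
  set B := sierpinski F n
  have hsub : fromBlocks B B 0 B - 1 = fromBlocks (B - 1) B 0 (B - 1) := by
    simp only [← fromBlocks_one, sub_eq_add_neg, fromBlocks_neg, fromBlocks_add, neg_zero,
      add_zero]
  have hconj : SemiconjBy (fromBlocks 1 0 0 B) (fromBlocks (B - 1) B 0 (B - 1))
      (fromBlocks (B - 1) 1 0 (B - 1)) := by
    simp only [SemiconjBy, fromBlocks_multiply]
    congr 1 <;> simp [mul_sub, sub_mul]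
  have hdet : IsUnit (fromBlocks (1 : Matrix (Fin (2 ^ n)) _ F) 0 0 B).det := by
    simp [det_fromBlocks_zero₂₁, B, det_sierpinski]
  rw [sierpinski_succ_s8, ← map_one (reindexAlgEquiv F F (finSumFinTwoPowEquiv n)), ← map_sub,
    ← map_pow, coe_reindexAlgEquiv, rank_reindex, hsub,
    rank_pow_eq_of_semiconjBy hdet hconj, rank_fromBlocks_one_pow_succ]

lemma rank_sierpinski_sub_one_pow [CharZero F] (n k : ℕ) :
    ((sierpinski F n - 1) ^ k).rank = chooseHalfSum n (n + 1 - k) := by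
  induction n generalizing k with
  | zero =>
    rcases k with _ | k
    · simp [chooseHalfSum]
    · simp [sierpinski, chooseHalfSum]
  | succ n ih =>
    rcases k with _ | k
    · rw [pow_zero, rank_one, Fintype.card_fin, Nat.sub_zero, chooseHalfSum_succ_self]
    · rw [rank_sierpinski_succ_sub_one_pow_succ, ih, ih, chooseHalfSum_succ]
      congr 2 <;> omega

end Sierpinski

/-- The Weyr structure of the `n`-th Sierpinski matrix at its eigenvalue `1` is, as a
multiset, the multiset of binomial coefficients `C(n, k)`, `0 ≤ k ≤ n`. -/
theorem sierpinski_weyr_structure_binomials {F : Type*} [Field F] [CharZero F] (n : ℕ) :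
    (Multiset.range (n + 1)).map
        (fun i => ((sierpinski F n - 1) ^ i).rank - ((sierpinski F n - 1) ^ (i + 1)).rank) =
      (Multiset.range (n + 1)).map (fun k => n.choose k) := by
  rw [← map_choose_sub_div_two]
  refine Multiset.map_congr rfl fun i hi => ?_
  have hin : i ≤ n := Nat.lt_succ_iff.mp (Multiset.mem_range.mp hi)
  rw [rank_sierpinski_sub_one_pow, rank_sierpinski_sub_one_pow,
    show n + 1 - i = n - i + 1 by omega, show n + 1 - (i + 1) = n - i by omega]
  simp only [chooseHalfSum, Finset.sum_range_succ, Nat.add_sub_cancel_left]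
end

section
/- Let W be an n×n nilpotent matrix over a field F of characteristic 0, B = I + W, and let X be the 3×3 block matrix with W on the diagonal, B on the first superdiagonal, and 0 elsewhere. Then for 2 ≤ k, rank(X^k) = rank(W^(k-2)) + rank(W^k) + rank(W^(k+2)). -/
/-!
Since `W` is nilpotent, `B = 1 + W` is invertible, and conjugating by `diag(1, B, B²)` turns `X`
into the block matrix `[[W, 1, 0], [0, W, 1], [0, 0, W]]`, which is the Jordan block
`J(x) = [[x, 1, 0], [0, x, 1], [0, 0, x]]` over `F[x]` with `W` substituted for `x`.
For `k = m + 2`, the entries of `J(x)^k` are `x^k`, `k x^(k-1)` and `C(k,2) x^m`, and explicit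
row and column operations bring it to `diag(x^m, x^(m+2), x^(m+4))`; their determinants only
involve `C(k,2)` and `C(k,2) - k² = -k(k+1)/2`, which are nonzero in characteristic `0`. So these
operations are invertible over `F[x]`, stay invertible after substituting `W`, and
`rank X^k = rank W^m + rank W^(m+2) + rank W^(m+4)`.
-/

open Matrix Polynomial Module

theorem Submodule.finrank_prod_eq {F V V' : Type*} [Field F] [AddCommGroup V] [Module F V]
    [AddCommGroup V'] [Module F V'] [FiniteDimensional F V] [FiniteDimensional F V']
    (p : Submodule F V) (q : Submodule F V') :
    finrank F (p.prod q) = finrank F p + finrank F q := by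
  let e : p.prod q ≃ₗ[F] p × q :=
    { toFun x := (⟨x.1.1, x.2.1⟩, ⟨x.1.2, x.2.2⟩)
      invFun x := ⟨(x.1, x.2), x.1.2, x.2.2⟩
      left_inv _ := rfl
      right_inv _ := rfl
      map_add' _ _ := rfl
      map_smul' _ _ := rfl }
  rw [e.finrank_eq, Module.finrank_prod]

theorem Nat.cast_choose_two_sub_sq_ne_zero {K : Type*} [Field K] [CharZero K] {k : ℕ}
    (hk : k ≠ 0) : (k.choose 2 : K) - (k : K) ^ 2 ≠ 0 := by
  have h : (k.choose 2 : K) - (k : K) ^ 2 = -((k * (k + 1) : ℕ) : K) / 2 := by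
    rw [Nat.cast_choose_two]
    push_cast
    ring
  rw [h]
  simp [hk, Nat.cast_add_one_ne_zero]

namespace Matrix

section Field

variable {F : Type*} [Field F]

theorem rank_fromBlocks_zero_zero {m o : Type*} [Fintype m] [Fintype o] [DecidableEq m]
    [DecidableEq o] (A : Matrix m m F) (D : Matrix o o F) :
    (fromBlocks A 0 0 D).rank = A.rank + D.rank := by
  set b := (Pi.basisFun F m).prod (Pi.basisFun F o)
  have h := LinearMap.toMatrix_prodMap (Pi.basisFun F m) (Pi.basisFun F o) (toLin' A) (toLin' D)
  rw [LinearMap.toMatrix_eq_toMatrix', LinearMap.toMatrix_eq_toMatrix', LinearMap.toMatrix'_toLin',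
    LinearMap.toMatrix'_toLin'] at h
  rw [rank_eq_finrank_range_toLin _ b b, ← h, toLin_toMatrix, LinearMap.range_prodMap,
    Submodule.finrank_prod_eq]
  rfl

theorem rank_compRingEquiv_diagonal {ι : Type*} [Fintype ι] [DecidableEq ι] :
    ∀ {k : ℕ} (d : Fin k → Matrix ι ι F),
      (compRingEquiv (Fin k) ι F (diagonal d)).rank = ∑ i, (d i).rank
  | 0, d => by simp [Subsingleton.elim (compRingEquiv (Fin 0) ι F (diagonal d)) 0]
  | k + 1, d => by
    let e : Fin (k + 1) × ι ≃ ι ⊕ Fin k × ι :=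
      (Equiv.prodCongrLeft fun _ => finSuccEquiv k).trans optionProdEquiv
    have h : compRingEquiv (Fin (k + 1)) ι F (diagonal d) =
        (fromBlocks (d 0) 0 0 (compRingEquiv (Fin k) ι F (diagonal (Fin.tail d)))).submatrix
          e e := by
      ext ⟨i, p⟩ ⟨j, q⟩
      cases i using Fin.cases <;> cases j using Fin.cases <;>
        simp [e, compRingEquiv_apply, diagonal, Fin.tail, (Fin.succ_ne_zero _).symm]
    rw [h, rank_submatrix, rank_fromBlocks_zero_zero, rank_compRingEquiv_diagonal,
      Fin.sum_univ_succ]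
    rfl

end Field

section CommRing

variable {R : Type*} [CommRing R]

theorem rank_mul_mul_of_isUnit {m : Type*} [Fintype m] [DecidableEq m] {P Q : Matrix m m R}
    (hP : IsUnit P) (hQ : IsUnit Q) (A : Matrix m m R) : (P * A * Q).rank = A.rank := by
  rw [rank_mul_eq_left_of_isUnit_det _ _ ((isUnit_iff_isUnit_det Q).mp hQ),
    rank_mul_eq_right_of_isUnit_det _ _ ((isUnit_iff_isUnit_det P).mp hP)]

theorem rank_eq_of_semiconjBy {m : Type*} [Fintype m] [DecidableEq m] {D A B : Matrix m m R}
    (hD : IsUnit D) (h : SemiconjBy D A B) : A.rank = B.rank := by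
  have hD' := (isUnit_iff_isUnit_det D).mp hD
  rw [← rank_mul_eq_right_of_isUnit_det D A hD', h.eq, rank_mul_eq_left_of_isUnit_det D B hD']

def bidiag3 (x y : R) : Matrix (Fin 3) (Fin 3) R := !![x, y, 0; 0, x, y; 0, 0, x]

theorem semiconjBy_diagonal_pow_bidiag3 (x u : R) :
    SemiconjBy (diagonal fun i : Fin 3 => u ^ (i : ℕ)) (bidiag3 x u) (bidiag3 x 1) := by
  ext i j
  fin_cases i <;> fin_cases j <;> simp [bidiag3, diagonal_mul, mul_diagonal] <;> ring

theorem bidiag3_one_pow (x : R) (m : ℕ) :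
    bidiag3 x 1 ^ (m + 2) =
      !![x ^ (m + 2), (m + 2 : ℕ) * x ^ (m + 1), (m + 2).choose 2 * x ^ m;
        0, x ^ (m + 2), (m + 2 : ℕ) * x ^ (m + 1);
        0, 0, x ^ (m + 2)] := by
  induction m with
  | zero =>
    rw [pow_two, bidiag3, mul_fin_three]
    norm_num [← two_mul, ← pow_two]
  | succ m ih =>
    rw [pow_succ, ih, bidiag3, mul_fin_three, Nat.choose_succ_succ' (m + 2), Nat.choose_one_right]
    ext i j
    fin_cases i <;> fin_cases j <;> simp <;> ring

theorem exists_isUnit_mul_bidiag3_pow_mul_eq_diagonal (x : R) {m : ℕ}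
    (hb : IsUnit (((m + 2).choose 2 : ℕ) : R))
    (hc : IsUnit ((((m + 2).choose 2 : ℕ) : R) - ((m + 2 : ℕ) : R) ^ 2)) :
    ∃ P Q : Matrix (Fin 3) (Fin 3) R, IsUnit P ∧ IsUnit Q ∧
      P * bidiag3 x 1 ^ (m + 2) * Q = diagonal ![x ^ m, x ^ (m + 2), x ^ (m + 4)] := by
  set a : R := ((m + 2 : ℕ) : R)
  set b : R := (((m + 2).choose 2 : ℕ) : R)
  -- elimination with the pivot `b * x ^ m` in the top right corner, then reversing the columns
  set P₀ : Matrix (Fin 3) (Fin 3) R := !![1, 0, 0; -(a * x), b, 0; -x ^ 2, a * x, b - a ^ 2]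
  set Q₀ : Matrix (Fin 3) (Fin 3) R := !![0, 0, b - a ^ 2; 0, b, a * x; 1, -(a * x), -x ^ 2]
  set S : Matrix (Fin 3) (Fin 3) R := diagonal ![b, b * (b - a ^ 2), -(b - a ^ 2)]
  have hP₀ : P₀.det = b * (b - a ^ 2) := by
    simp [P₀, det_fin_three]
  have hQ₀ : Q₀.det = -(b * (b - a ^ 2)) := by
    simp [Q₀, det_fin_three]
    ring
  have hS : IsUnit S := by
    refine isUnit_diagonal.mpr (Pi.isUnit_iff.mpr fun i => ?_)
    fin_cases i
    exacts [hb, hb.mul hc, hc.neg]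
  have key :
      P₀ * bidiag3 x 1 ^ (m + 2) * Q₀ = S * diagonal ![x ^ m, x ^ (m + 2), x ^ (m + 4)] := by
    rw [bidiag3_one_pow, diagonal_mul_diagonal, mul_fin_three, mul_fin_three]
    ext i j
    fin_cases i <;> fin_cases j <;> simp [a, b] <;> ring
  refine ⟨S⁻¹ * P₀, Q₀, (isUnit_nonsing_inv_iff.mpr hS).mul ?_, ?_, ?_⟩
  · rw [isUnit_iff_isUnit_det, hP₀]
    exact hb.mul hc
  · rw [isUnit_iff_isUnit_det, hQ₀]
    exact (hb.mul hc).neg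
  · rw [Matrix.mul_assoc, Matrix.mul_assoc, ← Matrix.mul_assoc P₀, key, ← Matrix.mul_assoc,
      nonsing_inv_mul _ ((isUnit_iff_isUnit_det S).mp hS), Matrix.one_mul]

end CommRing

end Matrix

section BlockAeval

variable {F : Type*} [Field F] {n : Type*} [Fintype n] [DecidableEq n]
  {ι : Type*} [Fintype ι] [DecidableEq ι] (W : Matrix n n F)

noncomputable def blockAeval : Matrix ι ι F[X] →+* Matrix (ι × n) (ι × n) F :=
  (compRingEquiv ι n F).toRingHom.comp (aeval W).toRingHom.mapMatrix

theorem blockAeval_apply (M : Matrix ι ι F[X]) (i j : ι) (p q : n) :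
    blockAeval W M (i, p) (j, q) = aeval W (M i j) p q :=
  rfl

theorem blockAeval_diagonal (d : ι → F[X]) :
    blockAeval W (diagonal d) = compRingEquiv ι n F (diagonal fun i => aeval W (d i)) := by
  simp [blockAeval, RingHom.mapMatrix_apply, diagonal_map]

theorem isUnit_blockAeval_diagonal {d : ι → F[X]} (h : ∀ i, IsUnit (aeval W (d i))) :
    IsUnit (blockAeval W (diagonal d)) := by
  rw [blockAeval_diagonal]
  exact ((Pi.isUnit_iff.mpr h).map (diagonalRingHom _ _)).map _

theorem rank_blockAeval_diagonal {k : ℕ} (d : Fin k → F[X]) :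
    (blockAeval W (diagonal d)).rank = ∑ i, (aeval W (d i)).rank := by
  rw [blockAeval_diagonal, rank_compRingEquiv_diagonal]

end BlockAeval

/-- Case `t = 3`: with `W` nilpotent, `B = I + W`, and `X` the `3 × 3` block bidiagonal
matrix with diagonal blocks `W` and superdiagonal blocks `B`, one has
`rank(X^k) = rank(W^(k-2)) + rank(W^k) + rank(W^(k+2))` for `k ≥ 2`. -/
theorem rank_pow_block_t3 {F : Type*} [Field F] [CharZero F] {n : ℕ}
    (W : Matrix (Fin n) (Fin n) F) (hW : IsNilpotent W)
    (X : Matrix (Fin 3 × Fin n) (Fin 3 × Fin n) F)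
    (hX : ∀ p q : Fin 3 × Fin n,
      X p q = if p.1 = q.1 then W p.2 q.2
        else if (p.1 : ℕ) + 1 = (q.1 : ℕ) then (1 + W) p.2 q.2 else 0) :
    ∀ k : ℕ, 2 ≤ k →
      (X ^ k).rank = (W ^ (k - 2)).rank + (W ^ k).rank + (W ^ (k + 2)).rank := by
  intro k hk
  obtain ⟨m, rfl⟩ := Nat.exists_eq_add_of_le' hk
  have hXW : X = blockAeval W (bidiag3 Polynomial.X (1 + Polynomial.X)) := by
    ext ⟨i, p⟩ ⟨j, q⟩
    rw [hX, blockAeval_apply]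
    fin_cases i <;> fin_cases j <;> simp [bidiag3]
  have hD : IsUnit (blockAeval W (diagonal fun i : Fin 3 => (1 + Polynomial.X) ^ (i : ℕ))) :=
    isUnit_blockAeval_diagonal W fun i => by simpa using hW.isUnit_one_add.pow i
  have hb : IsUnit (((m + 2).choose 2 : ℕ) : F[X]) := by
    rw [← map_natCast C]
    exact isUnit_C.mpr (Nat.cast_ne_zero.mpr (Nat.choose_pos (by omega)).ne').isUnit
  have hc : IsUnit ((((m + 2).choose 2 : ℕ) : F[X]) - ((m + 2 : ℕ) : F[X]) ^ 2) := by
    rw [← map_natCast C, ← map_natCast C, ← map_pow, ← map_sub]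
    exact isUnit_C.mpr (Nat.cast_choose_two_sub_sq_ne_zero (by omega)).isUnit
  obtain ⟨P, Q, hP, hQ, hPQ⟩ := exists_isUnit_mul_bidiag3_pow_mul_eq_diagonal Polynomial.X hb hc
  calc (X ^ (m + 2)).rank = (blockAeval W (bidiag3 Polynomial.X 1 ^ (m + 2))).rank := by
        rw [hXW, map_pow]
        exact rank_eq_of_semiconjBy hD
          (((semiconjBy_diagonal_pow_bidiag3 _ _).map (blockAeval W)).pow_right _)
    _ = (blockAeval W (P * bidiag3 Polynomial.X 1 ^ (m + 2) * Q)).rank := by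
        rw [map_mul, map_mul, rank_mul_mul_of_isUnit (hP.map _) (hQ.map _)]
    _ = (W ^ (m + 2 - 2)).rank + (W ^ (m + 2)).rank + (W ^ (m + 2 + 2)).rank := by
        rw [hPQ, rank_blockAeval_diagonal, Fin.sum_univ_three]
        simp
end

section
/- With notation as before (t = 3 case): rank(X) = 2n + rank(W^3), where X is the 3n×3n matrix with diagonal blocks W, first superdiagonal blocks B = I + W, and zero elsewhere, W nilpotent over a field of characteristic 0. -/
/-!
Write `X` for the `(t+1) × (t+1)` block bidiagonal matrix with diagonal blocks `A` and
superdiagonal blocks `B`, where `B` is invertible and commutes with `A`, and let `M = -B⁻¹A`.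
A vector `(v₀, …, vₜ)` lies in the kernel of `X` iff `A vᵢ + B vᵢ₊₁ = 0` for `i < t` and
`A vₜ = 0`, i.e. iff `vᵢ = Mⁱ v₀` and `A Mᵗ v₀ = 0`. Since `Bᵗ A Mᵗ = ±A^(t+1)`, the last
condition says `v₀ ∈ ker A^(t+1)`, so `ker X ≅ ker A^(t+1)` and rank–nullity gives
`rank X = t n + rank A^(t+1)`. For `A = W` nilpotent, `B = 1 + W` is a unit.
-/

open Function Module

lemma eq_zero_iff_forall_curry_eq_zero {α β γ : Type*} [Zero γ] (w : α × β → γ) :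
    w = 0 ↔ ∀ a, curry w a = 0 :=
  ⟨fun h a => by subst h; rfl, fun h => funext fun p => congr_fun (h p.1) p.2⟩

namespace Matrix

variable {ι R : Type*} [Fintype ι] [CommRing R]

def blockBidiagonal (t : ℕ) (A B : Matrix ι ι R) : Matrix (Fin t × ι) (Fin t × ι) R :=
  of fun p q => if p.1 = q.1 then A p.2 q.2 else if (p.1 : ℕ) + 1 = q.1 then B p.2 q.2 else 0

lemma curry_blockBidiagonal_mulVec {t : ℕ} (A B : Matrix ι ι R) (v : Fin t × ι → R) (i : Fin t) :
    curry (blockBidiagonal t A B *ᵥ v) i =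
      A *ᵥ curry v i + if h : (i : ℕ) + 1 < t then B *ᵥ curry v ⟨i + 1, h⟩ else 0 := by
  have hrow : curry (blockBidiagonal t A B *ᵥ v) i = ∑ k : Fin t,
      ((if i = k then A *ᵥ curry v k else 0) +
        (if (i : ℕ) + 1 = k then B *ᵥ curry v k else 0)) := by
    ext j
    simp only [curry_apply, mulVec, dotProduct, Fintype.sum_prod_type, blockBidiagonal, of_apply,
      Finset.sum_apply, Pi.add_apply]
    refine Finset.sum_congr rfl fun k _ => ?_
    by_cases hik : i = k
    · subst hik
      simp only [↓reduceIte, Nat.add_eq_left, one_ne_zero, Pi.zero_apply, add_zero]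
      rfl
    · split_ifs <;> simp only [Pi.zero_apply, zero_add, zero_mul, Finset.sum_const_zero, add_zero]
      rfl
  rw [hrow, Finset.sum_add_distrib, Finset.sum_ite_eq]
  simp only [Finset.mem_univ, if_true]
  congr 1
  split_ifs with h
  · rw [Fintype.sum_eq_single ⟨i + 1, h⟩ fun k hk => if_neg fun e => hk (Fin.ext e.symm)]
    exact if_pos rfl
  · exact Finset.sum_eq_zero fun k _ => if_neg fun (e : (i : ℕ) + 1 = k) => h (e ▸ k.isLt)

variable [DecidableEq ι] {A B M : Matrix ι ι R}

def powerColumn (t : ℕ) (M : Matrix ι ι R) : Matrix (Fin t × ι) ι R :=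
  of fun p l => (M ^ (p.1 : ℕ)) p.2 l

lemma curry_powerColumn_mulVec {t : ℕ} (x : ι → R) (i : Fin t) :
    curry (powerColumn t M *ᵥ x) i = M ^ (i : ℕ) *ᵥ x :=
  rfl

lemma powerColumn_mulVec_injective (t : ℕ) : Injective (powerColumn (t + 1) M).mulVec :=
  fun x y hxy => by simpa [curry_powerColumn_mulVec] using congr_arg (curry · 0) hxy

lemma mul_mulVec_eq_zero_iff {U N : Matrix ι ι R} (hU : IsUnit U) (x : ι → R) :
    (U * N) *ᵥ x = 0 ↔ N *ᵥ x = 0 := by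
  rw [← mulVec_mulVec]
  exact (mulVec_injective_of_isUnit hU).eq_iff' (mulVec_zero U)

lemma mulVec_add_mulVec_eq_zero_iff (hB : IsUnit B) (hBM : B * M = -A) (w w' : ι → R) :
    A *ᵥ w + B *ᵥ w' = 0 ↔ w' = M *ᵥ w := by
  rw [add_comm, ← eq_neg_iff_add_eq_zero, ← neg_mulVec, ← hBM, ← mulVec_mulVec,
    (mulVec_injective_of_isUnit hB).eq_iff]

lemma commute_of_mul_eq_neg (hB : IsUnit B) (hAB : Commute A B) (hBM : B * M = -A) :
    Commute B M :=
  hB.mul_left_cancel <| by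
    rw [hBM, ← mul_assoc, hBM, mul_neg, neg_mul, hAB.eq]

lemma mulVec_mul_pow_eq_zero_iff (hB : IsUnit B) (hAB : Commute A B) (hBM : B * M = -A)
    (t : ℕ) (x : ι → R) : A *ᵥ (M ^ t *ᵥ x) = 0 ↔ A ^ (t + 1) *ᵥ x = 0 := by
  have key : B ^ t * (A * M ^ t) = (-1) ^ t * A ^ (t + 1) := by
    rw [← mul_assoc, ← (hAB.pow_right t).eq, mul_assoc,
      ← (commute_of_mul_eq_neg hB hAB hBM).mul_pow, hBM, neg_pow, pow_succ',
      ((Commute.neg_one_right A).pow_right t).left_comm]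
  rw [mulVec_mulVec, ← mul_mulVec_eq_zero_iff (hB.pow t), key,
    mul_mulVec_eq_zero_iff ((isUnit_neg_one (α := Matrix ι ι R)).pow t)]

lemma curry_eq_pow_mulVec_of_blockBidiagonal_mulVec_eq_zero (hB : IsUnit B) (hBM : B * M = -A)
    {t : ℕ} {v : Fin (t + 1) × ι → R} (hv : blockBidiagonal (t + 1) A B *ᵥ v = 0)
    (i : Fin (t + 1)) :
    curry v i = M ^ (i : ℕ) *ᵥ curry v 0 := by
  induction i using Fin.induction with
  | zero => rw [Fin.val_zero, pow_zero, one_mulVec]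
  | succ i ih =>
    have hrow := (eq_zero_iff_forall_curry_eq_zero _).1 hv i.castSucc
    rw [curry_blockBidiagonal_mulVec, dif_pos (by simp),
      mulVec_add_mulVec_eq_zero_iff hB hBM] at hrow
    rw [show i.succ = ⟨i.castSucc + 1, by simp⟩ from rfl, hrow, ih, mulVec_mulVec, ← pow_succ']

lemma blockBidiagonal_mulVec_powerColumn_mulVec_eq_zero_iff (hB : IsUnit B) (hAB : Commute A B)
    (hBM : B * M = -A) (t : ℕ) (x : ι → R) :
    blockBidiagonal (t + 1) A B *ᵥ (powerColumn (t + 1) M *ᵥ x) = 0 ↔ A ^ (t + 1) *ᵥ x = 0 := by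
  rw [eq_zero_iff_forall_curry_eq_zero, Fin.forall_fin_succ']
  have hrow : ∀ i : Fin t,
      curry (blockBidiagonal (t + 1) A B *ᵥ (powerColumn (t + 1) M *ᵥ x)) i.castSucc = 0 := by
    intro i
    rw [curry_blockBidiagonal_mulVec, dif_pos (by simp), mulVec_add_mulVec_eq_zero_iff hB hBM,
      curry_powerColumn_mulVec, curry_powerColumn_mulVec, mulVec_mulVec, ← pow_succ']
  rw [curry_blockBidiagonal_mulVec, dif_neg (by simp), add_zero, curry_powerColumn_mulVec,
    Fin.val_last, mulVec_mul_pow_eq_zero_iff hB hAB hBM]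
  exact and_iff_right hrow

theorem ker_blockBidiagonal_mulVecLin (hB : IsUnit B) (hAB : Commute A B) (hBM : B * M = -A)
    (t : ℕ) :
    LinearMap.ker (blockBidiagonal (t + 1) A B).mulVecLin =
      (LinearMap.ker (A ^ (t + 1)).mulVecLin).map (powerColumn (t + 1) M).mulVecLin := by
  ext v
  simp only [LinearMap.mem_ker, Submodule.mem_map, mulVecLin_apply]
  constructor
  · intro hv
    have hv' : powerColumn (t + 1) M *ᵥ curry v 0 = v := funext fun p =>
      congr_fun (curry_eq_pow_mulVec_of_blockBidiagonal_mulVec_eq_zero hB hBM hv p.1).symm p.2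
    refine ⟨curry v 0, ?_, hv'⟩
    rw [← blockBidiagonal_mulVec_powerColumn_mulVec_eq_zero_iff hB hAB hBM, hv', hv]
  · rintro ⟨x, hx, rfl⟩
    exact (blockBidiagonal_mulVec_powerColumn_mulVec_eq_zero_iff hB hAB hBM t x).2 hx

lemma rank_add_finrank_ker_mulVecLin {m n K : Type*} [Fintype m] [Fintype n] [Field K]
    (N : Matrix m n K) : N.rank + finrank K (LinearMap.ker N.mulVecLin) = Fintype.card n := by
  rw [rank, LinearMap.finrank_range_add_finrank_ker, finrank_fintype_fun_eq_card]

theorem rank_blockBidiagonal {K : Type*} [Field K] {A B : Matrix ι ι K} (hAB : Commute A B)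
    (hB : IsUnit B) (t : ℕ) :
    (blockBidiagonal (t + 1) A B).rank = t * Fintype.card ι + (A ^ (t + 1)).rank := by
  obtain ⟨M, hBM⟩ : ∃ M, B * M = -A := ⟨-((↑hB.unit⁻¹ : Matrix ι ι K) * A), by
    rw [mul_neg, ← mul_assoc, hB.mul_val_inv, one_mul]⟩
  have hker : finrank K (LinearMap.ker (blockBidiagonal (t + 1) A B).mulVecLin) =
      finrank K (LinearMap.ker (A ^ (t + 1)).mulVecLin) := by
    rw [ker_blockBidiagonal_mulVecLin hB hAB hBM]
    exact (Submodule.equivMapOfInjective _ (powerColumn_mulVec_injective t) _).finrank_eq.symm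
  have hX := rank_add_finrank_ker_mulVecLin (blockBidiagonal (t + 1) A B)
  have hA := rank_add_finrank_ker_mulVecLin (A ^ (t + 1))
  rw [Fintype.card_prod, Fintype.card_fin, add_mul, one_mul] at hX
  omega

end Matrix

theorem rank_block_t3_general {F : Type*} [Field F] {n : ℕ}
    (W : Matrix (Fin n) (Fin n) F) (hW : IsNilpotent W)
    (X : Matrix (Fin 3 × Fin n) (Fin 3 × Fin n) F)
    (hX : ∀ p q : Fin 3 × Fin n,
      X p q = if p.1 = q.1 then W p.2 q.2
        else if (p.1 : ℕ) + 1 = (q.1 : ℕ) then (1 + W) p.2 q.2 else 0) :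
    X.rank = 2 * n + (W ^ 3).rank := by
  obtain rfl : X = Matrix.blockBidiagonal 3 W (1 + W) := Matrix.ext hX
  simpa using Matrix.rank_blockBidiagonal ((Commute.one_right W).add_right (Commute.refl W))
    hW.isUnit_one_add 2

/-- Case `t = 3`: with `W` nilpotent, `B = I + W`, and `X` the `3 × 3` block bidiagonal
matrix with diagonal blocks `W` and superdiagonal blocks `B`, `rank(X) = 2n + rank(W^3)`. -/
theorem rank_block_t3 {F : Type*} [Field F] [CharZero F] {n : ℕ}
    (W : Matrix (Fin n) (Fin n) F) (hW : IsNilpotent W)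
    (X : Matrix (Fin 3 × Fin n) (Fin 3 × Fin n) F)
    (hX : ∀ p q : Fin 3 × Fin n,
      X p q = if p.1 = q.1 then W p.2 q.2
        else if (p.1 : ℕ) + 1 = (q.1 : ℕ) then (1 + W) p.2 q.2 else 0) :
    X.rank = 2 * n + (W ^ 3).rank :=
  rank_block_t3_general W hW X hX
end

section
/- Let W be nilpotent n×n over a field of characteristic 0 with W ≠ 0, B = I + W, and X the tn×tn block bidiagonal matrix with diagonal blocks W and superdiagonal blocks B. Then the nilpotent index of X equals the nilpotent index of W plus (t - 1). -/
open Matrix Kronecker Finset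

section aux
variable {F : Type*} [Field F]

lemma kron_pow {m n : ℕ} (A : Matrix (Fin m) (Fin m) F) (B : Matrix (Fin n) (Fin n) F) (k : ℕ) :
    (A ⊗ₖ B) ^ k = (A ^ k) ⊗ₖ (B ^ k) := by
  induction k with
  | zero => simp [Matrix.one_kronecker_one]
  | succ k ih => rw [pow_succ, pow_succ, pow_succ, ih, Matrix.mul_kronecker_mul]

def shiftM (t : ℕ) (F : Type*) [Field F] : Matrix (Fin t) (Fin t) F :=
  Matrix.of fun i j => if (i:ℕ) + 1 = (j:ℕ) then 1 else 0

lemma shift_pow {t : ℕ} (k : ℕ) :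
    (shiftM t F) ^ k = Matrix.of (fun (i j : Fin t) => if (i:ℕ) + k = (j:ℕ) then (1:F) else 0) := by
  induction k with
  | zero =>
    ext i j
    simp [Matrix.one_apply, Fin.val_eq_val, eq_comm]
  | succ k ih =>
    ext i j
    rw [pow_succ, ih]
    simp only [Matrix.mul_apply, Matrix.of_apply, shiftM]
    by_cases h : (i:ℕ) + k < t
    · rw [Finset.sum_eq_single (⟨(i:ℕ)+k, h⟩ : Fin t)]
      · simp [← add_assoc]
      · intro b _ hb
        rw [if_neg, zero_mul]
        intro hc
        exact hb (Fin.ext hc.symm)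
      · intro hmem; exact absurd (Finset.mem_univ _) hmem
    · rw [Finset.sum_eq_zero, if_neg]
      · have := j.isLt; omega
      · intro b _
        rw [if_neg, zero_mul]
        intro hc
        exact h (hc ▸ b.isLt)

lemma shift_pow_zero {t : ℕ} {k : ℕ} (hk : t ≤ k) : (shiftM t F) ^ k = 0 := by
  rw [shift_pow]
  ext i j
  have := j.isLt
  simp only [Matrix.of_apply, Matrix.zero_apply]
  rw [if_neg]
  omega

end aux

/-- General `t`: with `W ≠ 0` nilpotent of index `r`, `B = I + W`, and `X` the `t × t`
block bidiagonal matrix with diagonal blocks `W` and superdiagonal blocks `B`, the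
nilpotent index of `X` is `r + t - 1`. -/
theorem nilpotent_index_block_general_t {F : Type*} [Field F] [CharZero F] {n t : ℕ}
    (ht : 1 ≤ t) (W : Matrix (Fin n) (Fin n) F) (hW : W ≠ 0)
    (r : ℕ) (hr : 1 ≤ r) (h1 : W ^ r = 0) (h2 : W ^ (r - 1) ≠ 0)
    (X : Matrix (Fin t × Fin n) (Fin t × Fin n) F)
    (hX : ∀ p q : Fin t × Fin n,
      X p q = if p.1 = q.1 then W p.2 q.2
        else if (p.1 : ℕ) + 1 = (q.1 : ℕ) then (1 + W) p.2 q.2 else 0) :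
    X ^ (r + t - 1) = 0 ∧ X ^ (r + t - 2) ≠ 0 := by
  set B : Matrix (Fin n) (Fin n) F := 1 + W with hB
  set N : Matrix (Fin t) (Fin t) F := shiftM t F with hN
  have hXeq : X = (1 : Matrix (Fin t) (Fin t) F) ⊗ₖ W + N ⊗ₖ B := by
    ext ⟨i, a⟩ ⟨j, b⟩
    rw [hX]
    simp only [Matrix.add_apply, Matrix.kroneckerMap_apply, Matrix.one_apply, hN, shiftM,
      Matrix.of_apply]
    by_cases h : i = j
    · subst h
      rw [if_pos rfl, if_pos rfl, if_neg (by omega), zero_mul, add_zero, one_mul]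
    · rw [if_neg h, if_neg h, zero_mul, zero_add]
      by_cases h2' : (i:ℕ) + 1 = (j:ℕ)
      · rw [if_pos h2', if_pos h2', one_mul]
      · rw [if_neg h2', if_neg h2', zero_mul]
  have hC : Commute ((1 : Matrix (Fin t) (Fin t) F) ⊗ₖ W) (N ⊗ₖ B) := by
    unfold Commute SemiconjBy
    have hWBc : W * B = B * W := by rw [hB, mul_add, add_mul, mul_one, one_mul]
    rw [← Matrix.mul_kronecker_mul, ← Matrix.mul_kronecker_mul, one_mul, mul_one, hWBc]
  have hcast : ∀ c : ℕ, ((c : ℕ) : Matrix (Fin t × Fin n) (Fin t × Fin n) F) = (c : F) • 1 := by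
    intro c
    rw [Nat.cast_smul_eq_nsmul, nsmul_eq_mul, mul_one]
  have hpow : ∀ m : ℕ, X ^ m =
      ∑ k ∈ Finset.range (m + 1), (m.choose k : F) •
        ((N ^ (m - k)) ⊗ₖ (W ^ k * B ^ (m - k))) := by
    intro m
    rw [hXeq, hC.add_pow]
    refine Finset.sum_congr rfl fun k hk => ?_
    rw [kron_pow, kron_pow, one_pow, ← Matrix.mul_kronecker_mul, one_mul, hcast,
      mul_smul_comm, mul_one]
  constructor
  · rw [hpow]
    apply Finset.sum_eq_zero
    intro k hk
    simp only [Finset.mem_range] at hk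
    rcases le_or_gt r k with h | h
    · have hWk : W ^ k = 0 := by
        rw [← Nat.sub_add_cancel h, pow_add, h1, mul_zero]
      rw [hWk, zero_mul, Matrix.kronecker_zero, smul_zero]
    · rw [hN, shift_pow_zero (by omega), Matrix.zero_kronecker, smul_zero]
  · intro hz
    have hBu : IsUnit B := IsNilpotent.isUnit_one_add ⟨r, h1⟩
    have hWB : W ^ (r - 1) * B ^ (t - 1) ≠ 0 := fun h0 =>
      h2 (((hBu.pow (t - 1)).mul_left_eq_zero).mp h0)
    obtain ⟨a, b, hab⟩ : ∃ a b, (W ^ (r - 1) * B ^ (t - 1)) a b ≠ 0 := by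
      by_contra hc
      push_neg at hc
      exact hWB (by ext a b; simpa using hc a b)
    set m₂ := r + t - 2 with hm₂
    have hm₂' : m₂ = (r - 1) + (t - 1) := by omega
    rw [hpow] at hz
    have hsum := congrFun (congrFun hz (⟨0, by omega⟩, a)) (⟨t - 1, by omega⟩, b)
    rw [Matrix.sum_apply] at hsum
    simp only [Matrix.smul_apply, Matrix.kroneckerMap_apply, hN, shift_pow, Matrix.of_apply,
      smul_eq_mul, Matrix.zero_apply] at hsum
    rw [Finset.sum_eq_single_of_mem (r - 1)
        (by rw [Finset.mem_range]; omega)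
        (by
          intro k hk hne
          rw [Finset.mem_range] at hk
          rw [if_neg (by omega), zero_mul, mul_zero])] at hsum
    rw [if_pos (by omega), one_mul] at hsum
    have hkey : m₂ - (r - 1) = t - 1 := by omega
    rw [hkey] at hsum
    have hch : ((m₂.choose (r - 1) : ℕ) : F) ≠ 0 := by
      rw [Nat.cast_ne_zero]
      exact (Nat.choose_pos (by omega)).ne'
    exact hab ((mul_eq_zero.mp hsum).resolve_left hch)
end

section
/- Let A = F[x_1, ..., x_n]/(x_1², ..., x_n²) over a field F of characteristic 0, let l = x_1 + ... + x_n, and let g = (1+x_1)(1+x_2)···(1+x_n). Then the matrix of the multiplication map ×g : A → A with respect to the basis of square-free monomials in reverse lexicographic order is the n-th Sierpinski matrix B_n. -/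
/-- The quadratic monomial complete intersection `F[x_1,…,x_n]/(x_1²,…,x_n²)`. -/
def SquareFreeAlgebra (F : Type*) [Field F] (n : ℕ) :=
  MvPolynomial (Fin n) F ⧸
    Ideal.span (Set.range fun i : Fin n => (MvPolynomial.X i : MvPolynomial (Fin n) F) ^ 2)

noncomputable instance (F : Type*) [Field F] (n : ℕ) : CommRing (SquareFreeAlgebra F n) :=
  Ideal.Quotient.commRing _

noncomputable instance (F : Type*) [Field F] (n : ℕ) : Algebra F (SquareFreeAlgebra F n) :=
  Ideal.Quotient.algebra F

noncomputable instance (F : Type*) [Field F] (n : ℕ) : Module F (SquareFreeAlgebra F n) :=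
  Algebra.toModule

/-- The image of the variable `x i` in `F[x_1,…,x_n]/(x_1²,…,x_n²)`. -/
noncomputable def sfVar {F : Type*} [Field F] {n : ℕ} (i : Fin n) : SquareFreeAlgebra F n :=
  Ideal.Quotient.mk _ (MvPolynomial.X i)

/-- The square-free monomial indexed by `j : Fin (2^n)`: the product of the `x i` over
those `i` for which the `i`-th binary digit of `j` is `1`.  Listing these in the order
`j = 0, 1, 2, …` is exactly the reverse lexicographic order
`1 < x_1 < x_2 < x_1x_2 < x_3 < ⋯`. -/
noncomputable def sfMonomial {F : Type*} [Field F] {n : ℕ} (j : Fin (2 ^ n)) :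
    SquareFreeAlgebra F n :=
  ∏ i : Fin n, if (j : ℕ).testBit (i : ℕ) then sfVar i else 1

theorem Nat.testBit_two_pow_mul_add_le_iff {n a b x y : ℕ} (hx : x < 2 ^ n) (hy : y < 2 ^ n) :
    (2 ^ n * a + x).testBit ≤ (2 ^ n * b + y).testBit ↔
      a.testBit ≤ b.testBit ∧ x.testBit ≤ y.testBit := by
  simp only [Pi.le_def, Nat.testBit_two_pow_mul_add _ hx, Nat.testBit_two_pow_mul_add _ hy]
  refine ⟨fun h => ⟨fun k => ?_, fun k => ?_⟩, fun ⟨hab, hxy⟩ k => ?_⟩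
  · simpa using h (n + k)
  · by_cases hk : k < n
    · simpa [hk] using h k
    · simp [Nat.testBit_lt_two_pow (hx.trans_le (Nat.pow_le_pow_right two_pos (not_lt.mp hk)))]
  · split_ifs
    exacts [hxy k, hab _]

open scoped Classical in
theorem sierpinski_apply (F : Type*) [Zero F] [One F] (n : ℕ) (i j : Fin (2 ^ n)) :
    sierpinski F n i j = if (i : ℕ).testBit ≤ (j : ℕ).testBit then 1 else 0 := by
  induction n with
  | zero =>
    obtain rfl : i = j := Subsingleton.elim (α := Fin 1) i j
    simp [sierpinski]
  | succ n ih =>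
    set e : Fin (2 ^ n) ⊕ Fin (2 ^ n) ≃ Fin (2 ^ (n + 1)) :=
      finSumFinEquiv.trans (finCongr (by rw [pow_succ, mul_two]))
    have he_val : ∀ p, (e p : ℕ) =
        2 ^ n * Sum.elim (fun _ => 0) (fun _ => 1) p + (Sum.elim id id p : Fin (2 ^ n)) := by
      rintro (x | x) <;> simp [e, add_comm]
    have h_one_zero : ¬ (1 : ℕ).testBit ≤ (0 : ℕ).testBit := fun h => absurd (h 0) (by decide)
    obtain ⟨p, rfl⟩ := e.surjective i
    obtain ⟨q, rfl⟩ := e.surjective j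
    rw [sierpinski, Matrix.reindex_apply, Matrix.submatrix_apply, Equiv.symm_apply_apply,
      Equiv.symm_apply_apply, he_val, he_val,
      Nat.testBit_two_pow_mul_add_le_iff (Fin.is_lt _) (Fin.is_lt _)]
    rcases p with x | x <;> rcases q with y | y <;> simp [ih, h_one_zero, Pi.le_def]

def finTwoPowEquivBits (n : ℕ) : Fin (2 ^ n) ≃ (Fin n → Bool) :=
  finFunctionFinEquiv.symm.trans (Equiv.arrowCongr (Equiv.refl _) finTwoEquiv)

theorem finTwoPowEquivBits_apply {n : ℕ} (j : Fin (2 ^ n)) (k : Fin n) :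
    finTwoPowEquivBits n j k = (j : ℕ).testBit k := by
  change finTwoEquiv (finFunctionFinEquiv.symm j k) = _
  rw [Nat.testBit_eq_decide_div_mod_eq, ← finFunctionFinEquiv_symm_apply_val]
  generalize finFunctionFinEquiv.symm j k = d
  fin_cases d <;> rfl

theorem finTwoPowEquivBits_le_iff {n : ℕ} (i j : Fin (2 ^ n)) :
    finTwoPowEquivBits n i ≤ finTwoPowEquivBits n j ↔ (i : ℕ).testBit ≤ (j : ℕ).testBit := by
  simp only [Pi.le_def, finTwoPowEquivBits_apply]
  refine ⟨fun h k => ?_, fun h k => h k⟩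
  by_cases hk : k < n
  · exact h ⟨k, hk⟩
  · simp [Nat.testBit_lt_two_pow (i.2.trans_le (Nat.pow_le_pow_right two_pos (not_lt.mp hk)))]

theorem one_add_mul_ite_eq_sum {R : Type*} [Semiring R] {x : R} (hx : x * x = 0) (b : Bool) :
    (1 + x) * (if b then x else 1) = ∑ c : Bool, if b ≤ c then (if c then x else 1) else 0 := by
  cases b <;> simp [add_mul, hx, add_comm, Bool.le_iff_imp]

open scoped Classical in
theorem prod_one_add_mul_prod_ite_eq_sum {ι R : Type*} [Fintype ι] [DecidableEq ι]
    [CommSemiring R] {x : ι → R} (hx : ∀ k, x k * x k = 0) (s : ι → Bool) :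
    (∏ k, (1 + x k)) * ∏ k, (if s k then x k else 1) =
      ∑ t : ι → Bool, if s ≤ t then ∏ k, (if t k then x k else 1) else 0 := by
  simp only [← Finset.prod_mul_distrib, one_add_mul_ite_eq_sum (hx _), Fintype.prod_sum,
    Fintype.prod_ite_zero, Pi.le_def]

theorem sfVar_mul_self {F : Type*} [Field F] {n : ℕ} (k : Fin n) :
    sfVar (F := F) k * sfVar k = 0 := by
  change Ideal.Quotient.mk _ (MvPolynomial.X k * MvPolynomial.X k) = 0
  rw [← sq]
  exact Ideal.Quotient.eq_zero_iff_mem.mpr (Ideal.subset_span ⟨k, rfl⟩)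

theorem sfMonomial_eq_prod_finTwoPowEquivBits {F : Type*} [Field F] {n : ℕ} (j : Fin (2 ^ n)) :
    sfMonomial (F := F) j = ∏ k, if finTwoPowEquivBits n j k then sfVar k else 1 := by
  simp only [sfMonomial, finTwoPowEquivBits_apply]

theorem sierpinski_is_matrix_of_mul_general_element_general
    {F : Type*} [Field F] (n : ℕ)
    (g : SquareFreeAlgebra F n) (hg : g = ∏ i : Fin n, (1 + sfVar i)) :
    ∀ i : Fin (2 ^ n),
      g * sfMonomial i = ∑ j : Fin (2 ^ n), sierpinski F n i j • sfMonomial j := by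
  intro i
  rw [hg, sfMonomial_eq_prod_finTwoPowEquivBits,
    prod_one_add_mul_prod_ite_eq_sum sfVar_mul_self, ← (finTwoPowEquivBits n).symm.sum_comp]
  refine Fintype.sum_congr _ _ fun t => ?_
  rw [sierpinski_apply, ← finTwoPowEquivBits_le_iff, Equiv.apply_symm_apply,
    sfMonomial_eq_prod_finTwoPowEquivBits, Equiv.apply_symm_apply, ite_smul, one_smul, zero_smul]

/-- In `A = F[x_1,…,x_n]/(x_1²,…,x_n²)` with basis the square-free monomials in reverse
lexicographic order, the matrix of multiplication by `g = (1+x_1)⋯(1+x_n)` is the `n`-th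
Sierpinski matrix: the row of `g ⬝ (basis element i)` is row `i` of `B n`. -/
theorem sierpinski_is_matrix_of_mul_general_element
    {F : Type*} [Field F] [CharZero F] (n : ℕ)
    (g : SquareFreeAlgebra F n) (hg : g = ∏ i : Fin n, (1 + sfVar i)) :
    ∀ i : Fin (2 ^ n),
      g * sfMonomial i = ∑ j : Fin (2 ^ n), sierpinski F n i j • sfMonomial j :=
  sierpinski_is_matrix_of_mul_general_element_general n g hg
end
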